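/- Assume f₀ : 𝒳ⁿ → ℝⁿ is Lipschitz on bounded sets with f₀(0) = 0, and assume the system ẋ(t) = f₀(x_t) is RFC. Then the system is GAS if and only if the following two properties hold: (stability) for every ε > 0 there exists δ > 0 such that for all x₀ ∈ 𝒳ⁿ with ‖x₀‖ ≤ δ the solution satisfies |x(t,x₀)| ≤ ε for all t ≥ 0; (global attractivity) for every x₀ ∈ 𝒳ⁿ, x(t,x₀) → 0 as t → ∞. -/

import Mathlib

open Set Filter MeasureTheory Topology
open scoped NNReal

noncomputable section

/-- `ℝⁿ` with the Euclidean norm. -/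
abbrev Vec (n : ℕ) : Type := EuclideanSpace ℝ (Fin n)

/-- The state space `𝒳ⁿ = C([-Δ,0], ℝⁿ)`, equipped with the sup norm. -/
abbrev Hist (Δ : ℝ≥0) (n : ℕ) : Type :=
  ContinuousMap (Icc (-(Δ : ℝ)) (0 : ℝ)) (Vec n)

theorem zero_mem_IccD (Δ : ℝ≥0) : (0 : ℝ) ∈ Icc (-(Δ : ℝ)) (0 : ℝ) :=
  ⟨neg_nonpos.mpr Δ.coe_nonneg, le_refl 0⟩

/-- `φ(0)`: the current value of a history segment. -/
def ev0 {Δ : ℝ≥0} {n : ℕ} (φ : Hist Δ n) : Vec n :=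
  φ ⟨0, zero_mem_IccD Δ⟩

/-! ### Comparison functions -/

/-- Class `𝒦`: continuous, strictly increasing, zero at zero (on `[0,∞)`). -/
def ClassK (α : ℝ → ℝ) : Prop :=
  ContinuousOn α (Ici 0) ∧ StrictMonoOn α (Ici 0) ∧ α 0 = 0

/-- Class `𝒦∞`: class `𝒦` and unbounded. -/
def ClassKinf (α : ℝ → ℝ) : Prop :=
  ClassK α ∧ Tendsto α atTop atTop

/-- Class `𝒩`: continuous, nondecreasing, zero at zero (on `[0,∞)`). -/
def ClassN (α : ℝ → ℝ) : Prop :=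
  ContinuousOn α (Ici 0) ∧ MonotoneOn α (Ici 0) ∧ α 0 = 0

/-- Class `𝒫`: continuous, zero at zero, positive on `(0,∞)`. -/
def ClassP (α : ℝ → ℝ) : Prop :=
  ContinuousOn α (Ici 0) ∧ α 0 = 0 ∧ ∀ s : ℝ, 0 < s → 0 < α s

/-- Class `𝒦ℒ`. -/
def ClassKL (β : ℝ → ℝ → ℝ) : Prop :=
  (∀ t : ℝ, 0 ≤ t → ClassK fun s => β s t) ∧
    ∀ s : ℝ, 0 ≤ s →
      ContinuousOn (β s) (Ici 0) ∧ AntitoneOn (β s) (Ici 0) ∧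
        Tendsto (β s) atTop (𝓝 0)

/-! ### Inputs -/

/-- Admissible input: Lebesgue measurable and locally essentially bounded. -/
def IsInput {m : ℕ} (u : ℝ → Vec m) : Prop :=
  Measurable u ∧ ∀ T : ℝ, 0 < T → ∃ C : ℝ, ∀ᵐ t ∂volume, t ∈ Icc (0 : ℝ) T → ‖u t‖ ≤ C

/-- Essential supremum of `‖u‖` over a set of times. -/
def essBnd {m : ℕ} (u : ℝ → Vec m) (s : Set ℝ) : ℝ :=
  sInf {C : ℝ | 0 ≤ C ∧ ∀ᵐ τ ∂volume, τ ∈ s → ‖u τ‖ ≤ C}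

/-! ### History segments along a trajectory -/

-- The history segment `x_t ∈ 𝒳ⁿ` of a trajectory `x : ℝ → ℝⁿ` (with junk value `0`
-- when `x` is not continuous on `[t-Δ, t]`).
open Classical in
def seg (Δ : ℝ≥0) {n : ℕ} (x : ℝ → Vec n) (t : ℝ) : Hist Δ n :=
  if hx : ContinuousOn x (Icc (t - (Δ : ℝ)) t) then
    { toFun := fun τ => x (t + τ.1)
      continuous_toFun := by
        have h1 : Continuous fun τ : Icc (-(Δ : ℝ)) (0 : ℝ) => t + τ.1 :=
          continuous_const.add continuous_subtype_val
        have h2 : ∀ τ : Icc (-(Δ : ℝ)) (0 : ℝ), t + τ.1 ∈ Icc (t - (Δ : ℝ)) t := by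
          rintro ⟨τ, hτ⟩
          rw [mem_Icc] at hτ ⊢
          constructor
          · linarith [hτ.1]
          · linarith [hτ.2]
        exact hx.comp_continuous h1 h2 }
  else 0

/-! ### Driver's derivative and Dini derivative -/

/-- The deformed history `φ_{h,w}` appearing in Driver's derivative: for `0 ≤ h < Δ`,
`φ_{h,w}(s) = φ(s+h)` for `s ∈ [-Δ,-h)` and `φ_{h,w}(s) = φ(0) + w(h+s)` for `s ∈ [-h,0]`. -/
def shiftSeg {Δ : ℝ≥0} {n : ℕ} (φ : Hist Δ n) (w : Vec n) (h : ℝ) : Hist Δ n :=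
  { toFun := fun s =>
      φ (projIcc (-(Δ : ℝ)) 0 (neg_nonpos.mpr Δ.coe_nonneg) (s.1 + h)) + max (h + s.1) 0 • w
    continuous_toFun := by
      refine Continuous.add ?_ ?_
      · exact φ.continuous.comp (continuous_projIcc.comp
          (continuous_subtype_val.add continuous_const))
      · exact ((continuous_const.add continuous_subtype_val).max continuous_const).smul
          continuous_const }

/-- Driver's derivative `D⁺V(φ,w)`, valued in the extended reals. -/
def driverD {Δ : ℝ≥0} {n : ℕ} (V : Hist Δ n → ℝ) (φ : Hist Δ n) (w : Vec n) : EReal :=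
  limsup (fun h : ℝ => (((V (shiftSeg φ w h) - V φ) / h : ℝ) : EReal)) (𝓝[>] (0 : ℝ))

/-- Upper right-hand Dini derivative of `ν : ℝ → ℝ`, valued in the extended reals. -/
def diniD (ν : ℝ → ℝ) (t : ℝ) : EReal :=
  limsup (fun h : ℝ => (((ν (t + h) - ν t) / h : ℝ) : EReal)) (𝓝[>] (0 : ℝ))

/-! ### Lipschitz conditions -/

/-- `f : 𝒳ⁿ × ℝᵐ → ℝⁿ` is Lipschitz on bounded sets. -/
def LipOnBounded {Δ : ℝ≥0} {n m : ℕ} (f : Hist Δ n → Vec m → Vec n) : Prop :=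
  ∀ r : ℝ, 0 < r → ∃ L : ℝ, 0 < L ∧
    ∀ (φ₁ φ₂ : Hist Δ n) (v₁ v₂ : Vec m),
      ‖φ₁‖ ≤ r → ‖φ₂‖ ≤ r → ‖v₁‖ ≤ r → ‖v₂‖ ≤ r →
        ‖f φ₁ v₁ - f φ₂ v₂‖ ≤ L * (‖φ₁ - φ₂‖ + ‖v₁ - v₂‖)

/-- An input-free vector field `f₀ : 𝒳ⁿ → ℝⁿ` Lipschitz on bounded sets. -/
def LipOnBounded₀ {Δ : ℝ≥0} {n : ℕ} (f₀ : Hist Δ n → Vec n) : Prop :=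
  ∀ r : ℝ, 0 < r → ∃ L : ℝ, 0 < L ∧
    ∀ φ₁ φ₂ : Hist Δ n, ‖φ₁‖ ≤ r → ‖φ₂‖ ≤ r → ‖f₀ φ₁ - f₀ φ₂‖ ≤ L * ‖φ₁ - φ₂‖

/-- A functional `V : 𝒳ⁿ → ℝ` Lipschitz on bounded sets. -/
def LipOnBoundedV {Δ : ℝ≥0} {n : ℕ} (V : Hist Δ n → ℝ) : Prop :=
  ∀ r : ℝ, 0 < r → ∃ L : ℝ, 0 < L ∧
    ∀ φ₁ φ₂ : Hist Δ n, ‖φ₁‖ ≤ r → ‖φ₂‖ ≤ r → |V φ₁ - V φ₂| ≤ L * ‖φ₁ - φ₂‖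

/-- A functional `V : 𝒳ⁿ → ℝ` locally Lipschitz. -/
def LocallyLipV {Δ : ℝ≥0} {n : ℕ} (V : Hist Δ n → ℝ) : Prop :=
  ∀ φ : Hist Δ n, ∃ δ : ℝ, 0 < δ ∧ ∃ L : ℝ, 0 < L ∧
    ∀ φ₁ φ₂ : Hist Δ n, ‖φ₁ - φ‖ ≤ δ → ‖φ₂ - φ‖ ≤ δ → |V φ₁ - V φ₂| ≤ L * ‖φ₁ - φ₂‖

/-! ### Solutions -/

/-- `x` is a solution of `ẋ(t) = f(x_t, u(t))` with initial state `x₀` on `[0, tmax)`. -/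
structure IsSolution (Δ : ℝ≥0) {n m : ℕ} (f : Hist Δ n → Vec m → Vec n)
    (u : ℝ → Vec m) (x₀ : Hist Δ n) (tmax : EReal) (x : ℝ → Vec n) : Prop where
  tmax_pos : 0 < tmax
  cont : ContinuousOn x {s : ℝ | -(Δ : ℝ) ≤ s ∧ (s : EReal) < tmax}
  init : ∀ τ : Icc (-(Δ : ℝ)) (0 : ℝ), x τ.1 = x₀ τ
  integrable : ∀ t : ℝ, 0 ≤ t → (t : EReal) < tmax →
    IntervalIntegrable (fun s => f (seg Δ x s) (u s)) volume 0 t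
  integral_eq : ∀ t : ℝ, 0 ≤ t → (t : EReal) < tmax →
    x t = x 0 + ∫ s in (0:ℝ)..t, f (seg Δ x s) (u s)

/-- Maximal solution: a solution admitting no proper extension. -/
def IsMaxSolution (Δ : ℝ≥0) {n m : ℕ} (f : Hist Δ n → Vec m → Vec n)
    (u : ℝ → Vec m) (x₀ : Hist Δ n) (tmax : EReal) (x : ℝ → Vec n) : Prop :=
  IsSolution Δ f u x₀ tmax x ∧
    ∀ (tmax' : EReal) (x' : ℝ → Vec n), IsSolution Δ f u x₀ tmax' x' →
      (∀ t : ℝ, -(Δ : ℝ) ≤ t → (t : EReal) < tmax → x' t = x t) → tmax' ≤ tmax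

/-- Solution of the input-free system `ẋ(t) = f₀(x_t)`. -/
def IsSolution₀ (Δ : ℝ≥0) {n : ℕ} (f₀ : Hist Δ n → Vec n) (x₀ : Hist Δ n)
    (tmax : EReal) (x : ℝ → Vec n) : Prop :=
  IsSolution Δ (fun φ (_ : Vec 0) => f₀ φ) (fun _ => 0) x₀ tmax x

/-- Maximal solution of the input-free system `ẋ(t) = f₀(x_t)`. -/
def IsMaxSolution₀ (Δ : ℝ≥0) {n : ℕ} (f₀ : Hist Δ n → Vec n) (x₀ : Hist Δ n)
    (tmax : EReal) (x : ℝ → Vec n) : Prop :=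
  IsMaxSolution Δ (fun φ (_ : Vec 0) => f₀ φ) (fun _ => 0) x₀ tmax x

/-! ### Stability properties (input-free systems) -/

/-- Global asymptotic stability (GAS). -/
def GAS (Δ : ℝ≥0) {n : ℕ} (f₀ : Hist Δ n → Vec n) : Prop :=
  ∃ β : ℝ → ℝ → ℝ, ClassKL β ∧
    ∀ (x₀ : Hist Δ n) (tmax : EReal) (x : ℝ → Vec n),
      IsMaxSolution₀ Δ f₀ x₀ tmax x →
        tmax = ⊤ ∧ ∀ t : ℝ, 0 ≤ t → ‖x t‖ ≤ β ‖x₀‖ t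

/-- Global exponential stability (GES). -/
def GES (Δ : ℝ≥0) {n : ℕ} (f₀ : Hist Δ n → Vec n) : Prop :=
  ∃ k : ℝ, 1 ≤ k ∧ ∃ lam : ℝ, 0 < lam ∧
    ∀ (x₀ : Hist Δ n) (tmax : EReal) (x : ℝ → Vec n),
      IsMaxSolution₀ Δ f₀ x₀ tmax x →
        tmax = ⊤ ∧ ∀ t : ℝ, 0 ≤ t → ‖x t‖ ≤ k * ‖x₀‖ * Real.exp (-lam * t)

/-- (Local) asymptotic stability (AS) of the origin. -/
def AS (Δ : ℝ≥0) {n : ℕ} (f₀ : Hist Δ n → Vec n) : Prop :=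
  ∃ r : ℝ, 0 < r ∧ ∃ β : ℝ → ℝ → ℝ, ClassKL β ∧
    ∀ (x₀ : Hist Δ n) (tmax : EReal) (x : ℝ → Vec n),
      IsMaxSolution₀ Δ f₀ x₀ tmax x → ‖x₀‖ ≤ r →
        tmax = ⊤ ∧ ∀ t : ℝ, 0 ≤ t → ‖x t‖ ≤ β ‖x₀‖ t

/-- (Local) exponential stability (ES) of the origin. -/
def ES (Δ : ℝ≥0) {n : ℕ} (f₀ : Hist Δ n → Vec n) : Prop :=
  ∃ r : ℝ, 0 < r ∧ ∃ k : ℝ, 1 ≤ k ∧ ∃ lam : ℝ, 0 < lam ∧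
    ∀ (x₀ : Hist Δ n) (tmax : EReal) (x : ℝ → Vec n),
      IsMaxSolution₀ Δ f₀ x₀ tmax x → ‖x₀‖ ≤ r →
        tmax = ⊤ ∧ ∀ t : ℝ, 0 ≤ t → ‖x t‖ ≤ k * ‖x₀‖ * Real.exp (-lam * t)

/-! ### Forward completeness -/

/-- Robust forward completeness (RFC) of `ẋ(t) = f(x_t,u(t))`. -/
def RFC (Δ : ℝ≥0) {n m : ℕ} (f : Hist Δ n → Vec m → Vec n) : Prop :=
  (∀ (x₀ : Hist Δ n) (u : ℝ → Vec m) (tmax : EReal) (x : ℝ → Vec n),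
      IsInput u → IsMaxSolution Δ f u x₀ tmax x → tmax = ⊤) ∧
    ∀ T : ℝ, 0 < T → ∀ r : ℝ, 0 < r → ∃ C : ℝ,
      ∀ (x₀ : Hist Δ n) (u : ℝ → Vec m) (tmax : EReal) (x : ℝ → Vec n),
        IsInput u → IsMaxSolution Δ f u x₀ tmax x →
          ‖x₀‖ ≤ r → essBnd u (Ici 0) ≤ r →
            ∀ t : ℝ, t ∈ Icc (0 : ℝ) T → ‖seg Δ x t‖ ≤ C

/-- Robust forward completeness of the input-free system `ẋ(t) = f₀(x_t)`. -/
def RFC₀ (Δ : ℝ≥0) {n : ℕ} (f₀ : Hist Δ n → Vec n) : Prop :=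
  RFC Δ (fun φ (_ : Vec 0) => f₀ φ)

/-! ### Input-to-state stability notions -/

/-- Input-to-state stability (ISS). -/
def ISS (Δ : ℝ≥0) {n m : ℕ} (f : Hist Δ n → Vec m → Vec n) : Prop :=
  ∃ β : ℝ → ℝ → ℝ, ∃ μ : ℝ → ℝ, ClassKL β ∧ ClassN μ ∧
    ∀ (x₀ : Hist Δ n) (u : ℝ → Vec m) (tmax : EReal) (x : ℝ → Vec n),
      IsInput u → IsMaxSolution Δ f u x₀ tmax x →
        tmax = ⊤ ∧ ∀ t : ℝ, 0 ≤ t → ‖x t‖ ≤ β ‖x₀‖ t + μ (essBnd u (Icc 0 t))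

/-- Local input-to-state stability (LISS). -/
def LISS (Δ : ℝ≥0) {n m : ℕ} (f : Hist Δ n → Vec m → Vec n) : Prop :=
  ∃ r : ℝ, 0 < r ∧ ∃ β : ℝ → ℝ → ℝ, ∃ μ : ℝ → ℝ, ClassKL β ∧ ClassN μ ∧
    ∀ (x₀ : Hist Δ n) (u : ℝ → Vec m) (tmax : EReal) (x : ℝ → Vec n),
      IsInput u → IsMaxSolution Δ f u x₀ tmax x →
        ‖x₀‖ ≤ r → essBnd u (Ici 0) ≤ r →
          tmax = ⊤ ∧ ∀ t : ℝ, 0 ≤ t → ‖x t‖ ≤ β ‖x₀‖ t + μ (essBnd u (Icc 0 t))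

/-- Integral input-to-state stability (iISS). -/
def iISS (Δ : ℝ≥0) {n m : ℕ} (f : Hist Δ n → Vec m → Vec n) : Prop :=
  ∃ β : ℝ → ℝ → ℝ, ∃ η μ : ℝ → ℝ, ClassKL β ∧ ClassN η ∧ ClassN μ ∧
    ∀ (x₀ : Hist Δ n) (u : ℝ → Vec m) (tmax : EReal) (x : ℝ → Vec n),
      IsInput u → IsMaxSolution Δ f u x₀ tmax x →
        tmax = ⊤ ∧ ∀ t : ℝ, 0 ≤ t →
          ‖x t‖ ≤ β ‖x₀‖ t + η (∫ s in (0:ℝ)..t, μ ‖u s‖)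

/-- The UBEBS estimate with offset `c`. -/
def UBEBSwith (Δ : ℝ≥0) {n m : ℕ} (f : Hist Δ n → Vec m → Vec n) (c : ℝ) : Prop :=
  ∃ α ξ ζ : ℝ → ℝ, ClassKinf α ∧ ClassKinf ξ ∧ ClassKinf ζ ∧
    ∀ (x₀ : Hist Δ n) (u : ℝ → Vec m) (tmax : EReal) (x : ℝ → Vec n),
      IsInput u → IsMaxSolution Δ f u x₀ tmax x →
        tmax = ⊤ ∧ ∀ t : ℝ, 0 ≤ t →
          α ‖x t‖ ≤ ξ ‖x₀‖ + (∫ s in (0:ℝ)..t, ζ ‖u s‖) + c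

/-! ### Lyapunov–Krasovskii functionals -/

/-- Lyapunov–Krasovskii functional candidate (LKF). -/
def IsLKF {Δ : ℝ≥0} {n : ℕ} (V : Hist Δ n → ℝ) : Prop :=
  (∀ φ, 0 ≤ V φ) ∧ LipOnBoundedV V ∧
    ∃ α₁ α₂ : ℝ → ℝ, ClassKinf α₁ ∧ ClassKinf α₂ ∧
      ∀ φ : Hist Δ n, α₁ ‖ev0 φ‖ ≤ V φ ∧ V φ ≤ α₂ ‖φ‖

/-- Coercive Lyapunov–Krasovskii functional candidate. -/
def IsCoerciveLKF {Δ : ℝ≥0} {n : ℕ} (V : Hist Δ n → ℝ) : Prop :=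
  (∀ φ, 0 ≤ V φ) ∧ LipOnBoundedV V ∧
    ∃ α₁ α₂ : ℝ → ℝ, ClassKinf α₁ ∧ ClassKinf α₂ ∧
      ∀ φ : Hist Δ n, α₁ ‖φ‖ ≤ V φ ∧ V φ ≤ α₂ ‖φ‖

end

/-! ### Helper lemmas -/

noncomputable section Helpers

open intervalIntegral

variable {Δ : ℝ≥0} {n : ℕ}

lemma isInput_zero : IsInput (fun _ : ℝ => (0 : Vec 0)) := by
  refine ⟨measurable_const, fun T _ => ⟨0, ?_⟩⟩
  filter_upwards with t _
  simp

lemma essBnd_zero_le {r : ℝ} (hr : 0 ≤ r) (s : Set ℝ) :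
    essBnd (fun _ : ℝ => (0 : Vec 0)) s ≤ r := by
  have h0 : (0 : ℝ) ∈ {C : ℝ | 0 ≤ C ∧ ∀ᵐ τ ∂volume, τ ∈ s → ‖(0 : Vec 0)‖ ≤ C} := by
    refine ⟨le_refl 0, ?_⟩
    filter_upwards with τ _
    simp
  have : essBnd (fun _ : ℝ => (0 : Vec 0)) s ≤ 0 :=
    csInf_le ⟨0, fun C hC => hC.1⟩ h0
  linarith

lemma seg_apply {x : ℝ → Vec n} {t : ℝ} (hx : ContinuousOn x (Icc (t - (Δ : ℝ)) t))
    (τ : Icc (-(Δ : ℝ)) (0 : ℝ)) : seg Δ x t τ = x (t + τ.1) := by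
  rw [seg, dif_pos hx]
  rfl

/-- For a solution defined for all times, `x` is continuous on `[-Δ, ∞)`. -/
lemma sol_cont {f₀ : Hist Δ n → Vec n} {x₀ : Hist Δ n} {x : ℝ → Vec n}
    (hx : IsSolution₀ Δ f₀ x₀ ⊤ x) : ContinuousOn x (Ici (-(Δ : ℝ))) := by
  have h := hx.cont
  have hset : {s : ℝ | -(Δ : ℝ) ≤ s ∧ (s : EReal) < (⊤ : EReal)} = Ici (-(Δ : ℝ)) := by
    ext s
    simp only [mem_setOf_eq, mem_Ici, EReal.coe_lt_top, and_true]
  rwa [hset] at h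

lemma seg_cont_window {x : ℝ → Vec n} (hx : ContinuousOn x (Ici (-(Δ : ℝ)))) {t : ℝ}
    (ht : 0 ≤ t) : ContinuousOn x (Icc (t - (Δ : ℝ)) t) := by
  refine hx.mono fun s hs => ?_
  have hΔ : (0:ℝ) ≤ (Δ : ℝ) := Δ.coe_nonneg
  have h1 := hs.1
  simp only [mem_Ici]
  linarith

lemma norm_seg_le_iff {x : ℝ → Vec n} {t c : ℝ} (hc : 0 ≤ c)
    (hx : ContinuousOn x (Icc (t - (Δ : ℝ)) t)) :
    ‖seg Δ x t‖ ≤ c ↔ ∀ τ : Icc (-(Δ : ℝ)) (0 : ℝ), ‖x (t + τ.1)‖ ≤ c := by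
  rw [ContinuousMap.norm_le _ hc]
  constructor
  · intro h τ; have := h τ; rwa [seg_apply hx] at this
  · intro h τ; rw [seg_apply hx]; exact h τ

lemma norm_apply_le_norm_seg {x : ℝ → Vec n} {t : ℝ}
    (hx : ContinuousOn x (Icc (t - (Δ : ℝ)) t)) :
    ‖x t‖ ≤ ‖seg Δ x t‖ := by
  have h := ContinuousMap.norm_coe_le_norm (seg Δ x t) ⟨0, zero_mem_IccD Δ⟩
  rwa [seg_apply hx, add_zero] at h

lemma seg_zero_eq {x : ℝ → Vec n} {x₀ : Hist Δ n}
    (hx : ContinuousOn x (Icc ((0:ℝ) - (Δ : ℝ)) 0))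
    (hinit : ∀ τ : Icc (-(Δ : ℝ)) (0 : ℝ), x τ.1 = x₀ τ) :
    seg Δ x 0 = x₀ := by
  refine ContinuousMap.ext fun τ => ?_
  rw [seg_apply hx, zero_add]
  exact hinit τ

end Helpers

noncomputable section Helpers2

open intervalIntegral

variable {Δ : ℝ≥0} {n : ℕ}

lemma maxsol_of_top {f₀ : Hist Δ n → Vec n} {x₀ : Hist Δ n} {x : ℝ → Vec n}
    (hx : IsSolution₀ Δ f₀ x₀ ⊤ x) : IsMaxSolution₀ Δ f₀ x₀ ⊤ x :=
  ⟨hx, fun _ _ _ _ => le_top⟩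

lemma tmax_top {f₀ : Hist Δ n → Vec n} (hRFC : RFC₀ Δ f₀)
    {x₀ : Hist Δ n} {tmax : EReal} {x : ℝ → Vec n}
    (hx : IsMaxSolution₀ Δ f₀ x₀ tmax x) : tmax = ⊤ :=
  hRFC.1 x₀ (fun _ => 0) tmax x isInput_zero hx

lemma rfc_bound {f₀ : Hist Δ n → Vec n} (hRFC : RFC₀ Δ f₀) {T r : ℝ} (hT : 0 < T)
    (hr : 0 < r) : ∃ C : ℝ, 0 ≤ C ∧ ∀ (x₀ : Hist Δ n) (x : ℝ → Vec n),
      IsMaxSolution₀ Δ f₀ x₀ ⊤ x → ‖x₀‖ ≤ r → ∀ t ∈ Icc (0:ℝ) T, ‖seg Δ x t‖ ≤ C := by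
  obtain ⟨C, hC⟩ := hRFC.2 T hT r hr
  refine ⟨max C 0, le_max_right _ _, fun x₀ x hx hx₀ t ht => ?_⟩
  exact le_trans (hC x₀ (fun _ => 0) ⊤ x isInput_zero hx hx₀ (essBnd_zero_le hr.le _) t ht)
    (le_max_left _ _)

/-- `f₀` Lipschitz on bounded sets is continuous. -/
lemma f0_continuous {f₀ : Hist Δ n → Vec n} (hf : LipOnBounded₀ f₀) : Continuous f₀ := by
  rw [continuous_iff_continuousAt]
  intro φ
  obtain ⟨L, hL, hLip⟩ := hf (‖φ‖ + 1) (by positivity)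
  rw [Metric.continuousAt_iff]
  intro ε hε
  refine ⟨min 1 (ε / (L + 1)), by positivity, fun {ψ} hψ => ?_⟩
  rw [dist_eq_norm] at hψ ⊢
  have h1 : ‖ψ - φ‖ < 1 := lt_of_lt_of_le hψ (min_le_left _ _)
  have h2 : ‖ψ‖ ≤ ‖φ‖ + 1 := by
    have := norm_sub_norm_le ψ φ
    linarith
  have h3 := hLip ψ φ h2 (by linarith [norm_nonneg φ])
  calc ‖f₀ ψ - f₀ φ‖ ≤ L * ‖ψ - φ‖ := h3
    _ ≤ L * (ε / (L + 1)) := by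
        have := lt_of_lt_of_le hψ (min_le_right _ _)
        nlinarith [norm_nonneg (ψ - φ)]
    _ < (L + 1) * (ε / (L + 1)) := by
        exact mul_lt_mul_of_pos_right (by linarith) (by positivity)
    _ = ε := by field_simp

/-- Continuity of `t ↦ x_t` on `[0,∞)`. -/
lemma segMap_continuousOn {x : ℝ → Vec n} (hx : ContinuousOn x (Ici (-(Δ : ℝ)))) :
    ContinuousOn (fun t => seg Δ x t) (Ici (0:ℝ)) := by
  intro t₀ ht₀
  have ht₀' : (0:ℝ) ≤ t₀ := ht₀
  have h01 : (0:ℝ) ≤ t₀ + 1 := by linarith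
  have hF : Continuous fun p : Icc (0:ℝ) (t₀+1) × Icc (-(Δ : ℝ)) (0:ℝ) =>
      x (p.1.1 + p.2.1) := by
    refine hx.comp_continuous ?_ ?_
    · exact (continuous_subtype_val.comp continuous_fst).add
        (continuous_subtype_val.comp continuous_snd)
    · rintro ⟨⟨a, ha⟩, ⟨b, hb⟩⟩
      simp only [mem_Ici]
      have := ha.1; have := hb.1
      linarith
  set F : C(Icc (0:ℝ) (t₀+1) × Icc (-(Δ : ℝ)) (0:ℝ), Vec n) := ⟨_, hF⟩ with hFdef
  have hG : Continuous fun t : ℝ => F.curry (projIcc 0 (t₀+1) h01 t) :=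
    F.curry.continuous.comp continuous_projIcc
  have heq : ∀ t ∈ Ici (0:ℝ) ∩ Iio (t₀+1), seg Δ x t = F.curry (projIcc 0 (t₀+1) h01 t) := by
    intro t ht
    have htmem : t ∈ Icc (0:ℝ) (t₀+1) := ⟨ht.1, le_of_lt ht.2⟩
    rw [projIcc_of_mem h01 htmem]
    refine ContinuousMap.ext fun τ => ?_
    rw [seg_apply (seg_cont_window hx ht.1)]
    rfl
  have hmem : Ici (0:ℝ) ∩ Iio (t₀+1) ∈ 𝓝[Ici (0:ℝ)] t₀ :=
    inter_mem self_mem_nhdsWithin (mem_nhdsWithin_of_mem_nhds (Iio_mem_nhds (by linarith)))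
  refine (hG.continuousAt.continuousWithinAt).congr_of_eventuallyEq ?_ ?_
  · filter_upwards [hmem] with t ht
    exact heq t ht
  · exact heq t₀ ⟨ht₀, by simp only [mem_Iio]; linarith⟩

lemma integrand_continuousOn {f₀ : Hist Δ n → Vec n} (hf : LipOnBounded₀ f₀)
    {x : ℝ → Vec n} (hx : ContinuousOn x (Ici (-(Δ : ℝ)))) :
    ContinuousOn (fun s => f₀ (seg Δ x s)) (Ici (0:ℝ)) :=
  (f0_continuous hf).comp_continuousOn (segMap_continuousOn hx)

lemma integrand_intervalIntegrable {f₀ : Hist Δ n → Vec n} (hf : LipOnBounded₀ f₀)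
    {x : ℝ → Vec n} (hx : ContinuousOn x (Ici (-(Δ : ℝ)))) {t : ℝ} (ht : 0 ≤ t) :
    IntervalIntegrable (fun s => f₀ (seg Δ x s)) volume 0 t := by
  refine ContinuousOn.intervalIntegrable ?_
  refine (integrand_continuousOn hf hx).mono ?_
  rw [uIcc_of_le ht]
  exact fun s hs => hs.1

/-- Shift identity for segments. -/
lemma seg_shift {x : ℝ → Vec n} (hx : ContinuousOn x (Ici (-(Δ : ℝ)))) {s t : ℝ}
    (hs : 0 ≤ s) (ht : 0 ≤ t) :
    seg Δ (fun u => x (s + u)) t = seg Δ x (s + t) := by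
  have hz : ContinuousOn (fun u => x (s + u)) (Ici (-(Δ : ℝ))) := by
    refine hx.comp (continuous_const.add continuous_id).continuousOn ?_
    intro u hu
    have : -(Δ : ℝ) ≤ u := hu
    simp only [mem_Ici]
    linarith
  refine ContinuousMap.ext fun τ => ?_
  rw [seg_apply (seg_cont_window hz ht), seg_apply (seg_cont_window hx (by linarith))]
  ring_nf

end Helpers2

noncomputable section Helpers3

open intervalIntegral

variable {Δ : ℝ≥0} {n : ℕ}

/-- Restarting a global solution at time `s ≥ 0` yields a (maximal) global solution. -/
lemma restart {f₀ : Hist Δ n → Vec n} (hf : LipOnBounded₀ f₀) {x₀ : Hist Δ n}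
    {x : ℝ → Vec n} (hx : IsSolution₀ Δ f₀ x₀ ⊤ x) {s : ℝ} (hs : 0 ≤ s) :
    IsSolution₀ Δ f₀ (seg Δ x s) ⊤ (fun t => x (s + t)) := by
  have hxc : ContinuousOn x (Ici (-(Δ : ℝ))) := sol_cont hx
  have hzc : ContinuousOn (fun u => x (s + u)) (Ici (-(Δ : ℝ))) := by
    refine hxc.comp (continuous_const.add continuous_id).continuousOn ?_
    intro u hu
    have : -(Δ : ℝ) ≤ u := hu
    simp only [mem_Ici]
    linarith
  constructor
  · exact EReal.zero_lt_top
  · have hset : {u : ℝ | -(Δ : ℝ) ≤ u ∧ (u : EReal) < (⊤ : EReal)} = Ici (-(Δ : ℝ)) := by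
      ext u
      simp only [mem_setOf_eq, mem_Ici, EReal.coe_lt_top, and_true]
    rw [hset]
    exact hzc
  · intro τ
    rw [seg_apply (seg_cont_window hxc hs)]
  · intro t ht _
    have : IntervalIntegrable (fun u => f₀ (seg Δ (fun v => x (s + v)) u)) volume 0 t :=
      integrand_intervalIntegrable hf hzc ht
    exact this
  · intro t ht _
    have hint : ∀ t' : ℝ, 0 ≤ t' → IntervalIntegrable (fun u => f₀ (seg Δ x u)) volume 0 t' :=
      fun t' ht' => integrand_intervalIntegrable hf hxc ht'
    have e1 : (∫ u in (0:ℝ)..t, f₀ (seg Δ (fun v => x (s + v)) u)) =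
        ∫ u in (0:ℝ)..t, f₀ (seg Δ x (s + u)) := by
      refine integral_congr fun u hu => ?_
      rw [uIcc_of_le ht] at hu
      rw [seg_shift hxc hs hu.1]
    have e2 : (∫ u in (0:ℝ)..t, f₀ (seg Δ x (s + u))) =
        ∫ u in (s + 0)..(s + t), f₀ (seg Δ x u) :=
      integral_comp_add_left (fun u => f₀ (seg Δ x u)) s
    have e3 : (∫ u in (0:ℝ)..(s+t), f₀ (seg Δ x u)) - ∫ u in (0:ℝ)..s, f₀ (seg Δ x u) =
        ∫ u in s..s + t, f₀ (seg Δ x u) :=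
      integral_interval_sub_left (hint (s + t) (by linarith)) (hint s hs)
    have h1 := hx.integral_eq (s + t) (by linarith) (EReal.coe_lt_top _)
    have h2 := hx.integral_eq s hs (EReal.coe_lt_top _)
    rw [e1, e2]
    simp only [add_zero]
    rw [← e3, h1, h2]
    abel

lemma restart_max {f₀ : Hist Δ n → Vec n} (hf : LipOnBounded₀ f₀) {x₀ : Hist Δ n}
    {x : ℝ → Vec n} (hx : IsSolution₀ Δ f₀ x₀ ⊤ x) {s : ℝ} (hs : 0 ≤ s) :
    IsMaxSolution₀ Δ f₀ (seg Δ x s) ⊤ (fun t => x (s + t)) :=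
  maxsol_of_top (restart hf hx hs)

end Helpers3

noncomputable section Helpers4

open intervalIntegral

variable {Δ : ℝ≥0} {n : ℕ}

/-- FTC helper: derivative of a primitive of a function continuous on `[0,∞)`. -/
lemma primitive_hasDerivWithinAt {f : ℝ → Vec n} (hf : ContinuousOn f (Ici 0))
    {t : ℝ} (ht : 0 ≤ t) :
    HasDerivWithinAt (fun u => ∫ s in (0:ℝ)..u, f s) (f t) (Ici t) t := by
  have hint : IntervalIntegrable f volume 0 t :=
    (hf.mono (by rw [uIcc_of_le ht]; exact fun s hs => hs.1)).intervalIntegrable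
  have hsub : Ioi t ⊆ Ici (0:ℝ) := fun s hs => le_of_lt (lt_of_le_of_lt ht hs)
  refine intervalIntegral.integral_hasDerivWithinAt_right hint ?_ ?_
  · obtain ⟨s, hs, hm⟩ := hf.stronglyMeasurableAtFilter_nhdsWithin (μ := volume) measurableSet_Ici t
    exact ⟨s, nhdsWithin_mono t hsub hs, hm⟩
  · exact (hf t ht).mono hsub

/-- Same for real-valued integrands. -/
lemma primitive_hasDerivWithinAt_real {f : ℝ → ℝ} (hf : ContinuousOn f (Ici 0))
    {t : ℝ} (ht : 0 ≤ t) :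
    HasDerivWithinAt (fun u => ∫ s in (0:ℝ)..u, f s) (f t) (Ici t) t := by
  have hint : IntervalIntegrable f volume 0 t :=
    (hf.mono (by rw [uIcc_of_le ht]; exact fun s hs => hs.1)).intervalIntegrable
  have hsub : Ioi t ⊆ Ici (0:ℝ) := fun s hs => le_of_lt (lt_of_le_of_lt ht hs)
  refine intervalIntegral.integral_hasDerivWithinAt_right hint ?_ ?_
  · obtain ⟨s, hs, hm⟩ := hf.stronglyMeasurableAtFilter_nhdsWithin (μ := volume) measurableSet_Ici t
    exact ⟨s, nhdsWithin_mono t hsub hs, hm⟩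
  · exact (hf t ht).mono hsub

/-- Grönwall-type continuous dependence on initial data. -/
lemma gronwall_dep {f₀ : Hist Δ n → Vec n} (hf : LipOnBounded₀ f₀)
    {x₀ y₀ : Hist Δ n} {x y : ℝ → Vec n}
    (hx : IsSolution₀ Δ f₀ x₀ ⊤ x) (hy : IsSolution₀ Δ f₀ y₀ ⊤ y)
    {T R L : ℝ} (hT : 0 ≤ T) (hR : 0 < R) (hL : 0 < L)
    (hLip : ∀ φ₁ φ₂ : Hist Δ n, ‖φ₁‖ ≤ R → ‖φ₂‖ ≤ R → ‖f₀ φ₁ - f₀ φ₂‖ ≤ L * ‖φ₁ - φ₂‖)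
    (hRx : ∀ t ∈ Icc (0:ℝ) T, ‖seg Δ x t‖ ≤ R)
    (hRy : ∀ t ∈ Icc (0:ℝ) T, ‖seg Δ y t‖ ≤ R) :
    ∀ t ∈ Icc (0:ℝ) T, ‖seg Δ x t - seg Δ y t‖ ≤ ‖x₀ - y₀‖ * Real.exp (L * t) := by
  have hxc : ContinuousOn x (Ici (-(Δ : ℝ))) := sol_cont hx
  have hyc : ContinuousOn y (Ici (-(Δ : ℝ))) := sol_cont hy
  set m : ℝ → ℝ := fun t => ‖seg Δ x t - seg Δ y t‖ with hm_def
  have hm0 : ∀ t, 0 ≤ m t := fun t => norm_nonneg _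
  have hmc : ContinuousOn m (Ici (0:ℝ)) :=
    ((segMap_continuousOn hxc).sub (segMap_continuousOn hyc)).norm
  have hLmc : ContinuousOn (fun t => L * m t) (Ici (0:ℝ)) := continuousOn_const.mul hmc
  set g : ℝ → ℝ := fun t => m 0 + ∫ s in (0:ℝ)..t, L * m s with hg_def
  have hLm_int : ∀ t : ℝ, 0 ≤ t → IntervalIntegrable (fun s => L * m s) volume 0 t := by
    intro t ht
    exact (hLmc.mono (by rw [uIcc_of_le ht]; exact fun s hs => hs.1)).intervalIntegrable
  have hg_mono : ∀ u t : ℝ, 0 ≤ u → u ≤ t → g u ≤ g t := by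
    intro u t hu hut
    have h1 : (∫ s in (0:ℝ)..t, L * m s) - ∫ s in (0:ℝ)..u, L * m s
        = ∫ s in u..t, L * m s :=
      integral_interval_sub_left (hLm_int t (le_trans hu hut)) (hLm_int u hu)
    have h2 : 0 ≤ ∫ s in u..t, L * m s :=
      intervalIntegral.integral_nonneg hut (fun s _ => mul_nonneg hL.le (hm0 s))
    simp only [hg_def]
    linarith [h1, h2]
  have hg_nonneg : ∀ t : ℝ, 0 ≤ t → 0 ≤ g t := by
    intro t ht
    have := hg_mono 0 t le_rfl ht
    have h0 : g 0 = m 0 := by simp [hg_def]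
    linarith [hm0 0, h0 ▸ this]
  -- the basic integral inequality
  have key : ∀ t ∈ Icc (0:ℝ) T, m t ≤ g t := by
    rintro t ⟨ht0, htT⟩
    have hwin : ∀ u : ℝ, 0 ≤ u → ContinuousOn x (Icc (u - (Δ:ℝ)) u) := fun u hu =>
      seg_cont_window hxc hu
    have hwiny : ∀ u : ℝ, 0 ≤ u → ContinuousOn y (Icc (u - (Δ:ℝ)) u) := fun u hu =>
      seg_cont_window hyc hu
    refine (ContinuousMap.norm_le _ (hg_nonneg t ht0)).mpr ?_
    intro τ
    have happ : (seg Δ x t - seg Δ y t) τ = x (t + τ.1) - y (t + τ.1) := by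
      simp only [ContinuousMap.sub_apply]
      rw [seg_apply (hwin t ht0), seg_apply (hwiny t ht0)]
    rw [happ]
    set u := t + τ.1 with hu_def
    have huΔ : -(Δ:ℝ) ≤ u := by
      have := τ.2.1
      simp only [hu_def]
      linarith
    have hu_le : u ≤ t := by
      have := τ.2.2
      simp only [hu_def]
      linarith
    rcases le_or_gt u 0 with hu0 | hu0
    · -- still in the initial segment
      have humem : u ∈ Icc (-(Δ:ℝ)) (0:ℝ) := ⟨huΔ, hu0⟩
      have hx0 : x u = x₀ ⟨u, humem⟩ := hx.init ⟨u, humem⟩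
      have hy0 : y u = y₀ ⟨u, humem⟩ := hy.init ⟨u, humem⟩
      rw [hx0, hy0]
      have : ‖(x₀ - y₀) ⟨u, humem⟩‖ ≤ ‖x₀ - y₀‖ := ContinuousMap.norm_coe_le_norm _ _
      rw [ContinuousMap.sub_apply] at this
      have hseg0x : seg Δ x 0 = x₀ := seg_zero_eq (by simpa using hwin 0 le_rfl) hx.init
      have hseg0y : seg Δ y 0 = y₀ := seg_zero_eq (by simpa using hwiny 0 le_rfl) hy.init
      have hm0eq : m 0 = ‖x₀ - y₀‖ := by rw [hm_def]; simp [hseg0x, hseg0y]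
      have hint0 : 0 ≤ ∫ s in (0:ℝ)..t, L * m s :=
        intervalIntegral.integral_nonneg ht0 (fun s _ => mul_nonneg hL.le (hm0 s))
      simp only [hg_def]
      rw [hm0eq]
      linarith
    · -- after time 0: use the integral equation
      have hu0' : 0 ≤ u := hu0.le
      have hxint := hx.integral_eq u hu0' (EReal.coe_lt_top _)
      have hyint := hy.integral_eq u hu0' (EReal.coe_lt_top _)
      have hdiff : x u - y u = (x 0 - y 0)
          + ∫ s in (0:ℝ)..u, (f₀ (seg Δ x s) - f₀ (seg Δ y s)) := by
        rw [hxint, hyint]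
        rw [intervalIntegral.integral_sub (integrand_intervalIntegrable hf hxc hu0')
          (integrand_intervalIntegrable hf hyc hu0')]
        abel
      have hbound : ‖∫ s in (0:ℝ)..u, (f₀ (seg Δ x s) - f₀ (seg Δ y s))‖
          ≤ ∫ s in (0:ℝ)..u, L * m s := by
        calc ‖∫ s in (0:ℝ)..u, (f₀ (seg Δ x s) - f₀ (seg Δ y s))‖
            ≤ ∫ s in (0:ℝ)..u, ‖f₀ (seg Δ x s) - f₀ (seg Δ y s)‖ :=
              intervalIntegral.norm_integral_le_integral_norm hu0'
          _ ≤ ∫ s in (0:ℝ)..u, L * m s := by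
              refine intervalIntegral.integral_mono_on hu0' ?_ (hLm_int u hu0') ?_
              · exact ContinuousOn.intervalIntegrable (by
                  refine ContinuousOn.norm ?_
                  refine ((integrand_continuousOn hf hxc).sub
                    (integrand_continuousOn hf hyc)).mono ?_
                  rw [uIcc_of_le hu0']
                  exact fun s hs => hs.1)
              · intro s hs
                refine hLip _ _ (hRx s ⟨hs.1, le_trans hs.2 (le_trans hu_le htT)⟩)
                  (hRy s ⟨hs.1, le_trans hs.2 (le_trans hu_le htT)⟩)
      have hinit_le : ‖x 0 - y 0‖ ≤ m 0 := by
        have hseg0x : seg Δ x 0 = x₀ := seg_zero_eq (by simpa using hwin 0 le_rfl) hx.init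
        have hseg0y : seg Δ y 0 = y₀ := seg_zero_eq (by simpa using hwiny 0 le_rfl) hy.init
        have h1 : ‖(seg Δ x 0 - seg Δ y 0) ⟨0, zero_mem_IccD Δ⟩‖ ≤ m 0 :=
          ContinuousMap.norm_coe_le_norm _ _
        have h2 : (seg Δ x 0 - seg Δ y 0) ⟨0, zero_mem_IccD Δ⟩ = x 0 - y 0 := by
          simp only [ContinuousMap.sub_apply]
          rw [seg_apply (hwin 0 le_rfl), seg_apply (hwiny 0 le_rfl), add_zero]
        rwa [h2] at h1
      have hmono : (∫ s in (0:ℝ)..u, L * m s) ≤ ∫ s in (0:ℝ)..t, L * m s := by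
        have := hg_mono u t hu0' hu_le
        simp only [hg_def] at this
        linarith
      calc ‖x u - y u‖ ≤ ‖x 0 - y 0‖ + ‖∫ s in (0:ℝ)..u, (f₀ (seg Δ x s) - f₀ (seg Δ y s))‖ := by
            rw [hdiff]; exact norm_add_le _ _
        _ ≤ m 0 + ∫ s in (0:ℝ)..t, L * m s := by
            have := le_trans hbound hmono
            linarith
        _ = g t := rfl
  -- Grönwall on g
  have hgc : ContinuousOn g (Icc (0:ℝ) T) := by
    refine ContinuousOn.add continuousOn_const ?_
    have hio : IntegrableOn (fun s => L * m s) (uIcc (0:ℝ) T) volume := by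
      rw [uIcc_of_le hT]
      exact (hLmc.mono (fun s hs => hs.1)).integrableOn_Icc
    have := intervalIntegral.continuousOn_primitive_interval hio
    rwa [uIcc_of_le hT] at this
  have hgderiv : ∀ t ∈ Ico (0:ℝ) T, HasDerivWithinAt g (L * m t) (Ici t) t := by
    intro t ht
    exact (primitive_hasDerivWithinAt_real hLmc ht.1).const_add (m 0)
  have hgbound : ∀ t ∈ Ico (0:ℝ) T, ‖L * m t‖ ≤ L * ‖g t‖ + 0 := by
    intro t ht
    rw [Real.norm_eq_abs, Real.norm_eq_abs, abs_of_nonneg (mul_nonneg hL.le (hm0 t)),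
      abs_of_nonneg (hg_nonneg t ht.1), add_zero]
    exact mul_le_mul_of_nonneg_left (key t ⟨ht.1, ht.2.le⟩) hL.le
  have hg0 : ‖g 0‖ ≤ m 0 := by
    have : g 0 = m 0 := by simp [hg_def]
    rw [this, Real.norm_eq_abs, abs_of_nonneg (hm0 0)]
  have hgron := norm_le_gronwallBound_of_norm_deriv_right_le hgc hgderiv hg0 hgbound
  intro t ht
  have := hgron t ht
  rw [gronwallBound_ε0, sub_zero, Real.norm_eq_abs, abs_of_nonneg (hg_nonneg t ht.1)] at this
  have hkey := key t ht
  have hm0eq : m 0 = ‖x₀ - y₀‖ := by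
    have hseg0x : seg Δ x 0 = x₀ := seg_zero_eq (by simpa using seg_cont_window hxc le_rfl) hx.init
    have hseg0y : seg Δ y 0 = y₀ := seg_zero_eq (by simpa using seg_cont_window hyc le_rfl) hy.init
    rw [hm_def]; simp [hseg0x, hseg0y]
  calc ‖seg Δ x t - seg Δ y t‖ = m t := rfl
    _ ≤ g t := hkey
    _ ≤ m 0 * Real.exp (L * t) := this
    _ = ‖x₀ - y₀‖ * Real.exp (L * t) := by rw [hm0eq]
end Helpers4

noncomputable section Helpers5

open intervalIntegral

variable {Δ : ℝ≥0} {n : ℕ}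

/-- The set of `M`-Lipschitz histories bounded by `C` is compact (Arzelà–Ascoli). -/
lemma lipschitz_ball_compact (C : ℝ) (hC : 0 ≤ C) (M : ℝ≥0) :
    IsCompact {φ : Hist Δ n | ‖φ‖ ≤ C ∧ LipschitzWith M ⇑φ} := by
  set X := Icc (-(Δ : ℝ)) (0:ℝ)
  set S : Set (Hist Δ n) := {φ : Hist Δ n | ‖φ‖ ≤ C ∧ LipschitzWith M ⇑φ}
  refine ArzelaAscoli.isCompact_of_equicontinuous S ?_ ?_
  · -- pointwise compactness
    have himg : ContinuousMap.toFun '' S =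
        {f : X → Vec n | (∀ x : X, f x ∈ Metric.closedBall (0 : Vec n) C) ∧
          LipschitzWith M f} := by
      ext f
      constructor
      · rintro ⟨φ, ⟨hφC, hφL⟩, rfl⟩
        refine ⟨fun x => ?_, hφL⟩
        rw [Metric.mem_closedBall, dist_zero_right]
        exact le_trans (ContinuousMap.norm_coe_le_norm φ x) hφC
      · rintro ⟨hfC, hfL⟩
        refine ⟨⟨f, hfL.continuous⟩, ⟨?_, hfL⟩, rfl⟩
        rw [ContinuousMap.norm_le _ hC]
        intro x
        have := hfC x
        rwa [Metric.mem_closedBall, dist_zero_right] at this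
    rw [himg]
    have hbig : IsCompact (univ.pi fun _ : X => Metric.closedBall (0 : Vec n) C) :=
      isCompact_univ_pi fun _ => isCompact_closedBall 0 C
    refine hbig.of_isClosed_subset ?_ ?_
    · refine IsClosed.inter ?_ ?_
      · show IsClosed {f : X → Vec n | ∀ x : X, f x ∈ Metric.closedBall (0 : Vec n) C}
        have : {f : X → Vec n | ∀ x : X, f x ∈ Metric.closedBall (0 : Vec n) C} =
            univ.pi fun _ : X => Metric.closedBall (0 : Vec n) C := by
          ext f; simp [Set.mem_pi]
        rw [this]
        exact isClosed_set_pi fun a _ => Metric.isClosed_closedBall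
      · show IsClosed {f : X → Vec n | LipschitzWith M f}
        have : {f : X → Vec n | LipschitzWith M f} =
            ⋂ (x : X) (y : X), {f : X → Vec n | dist (f x) (f y) ≤ (M:ℝ) * dist x y} := by
          ext f
          simp only [mem_setOf_eq, mem_iInter, lipschitzWith_iff_dist_le_mul]
        rw [this]
        refine isClosed_iInter fun x => isClosed_iInter fun y => ?_
        exact isClosed_le (((continuous_apply x).dist (continuous_apply y))) continuous_const
    · rintro f ⟨hfC, _⟩
      intro x _
      exact hfC x
  · -- equicontinuity
    intro x
    rw [Metric.equicontinuousAt_iff]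
    intro ε hε
    refine ⟨ε / ((M:ℝ) + 1), by positivity, fun y hy i => ?_⟩
    have hL : LipschitzWith M ⇑(i : Hist Δ n) := i.2.2
    calc dist ((i : Hist Δ n) x) ((i : Hist Δ n) y) ≤ (M:ℝ) * dist x y :=
          lipschitzWith_iff_dist_le_mul.mp hL x y
      _ ≤ (M:ℝ) * (ε / ((M:ℝ)+1)) := by
          refine mul_le_mul_of_nonneg_left ?_ M.coe_nonneg
          rw [dist_comm]
          exact hy.le
      _ < ((M:ℝ)+1) * (ε / ((M:ℝ)+1)) := by
          refine mul_lt_mul_of_pos_right (by linarith) (by positivity)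
      _ = ε := by field_simp

end Helpers5

noncomputable section Helpers6

open intervalIntegral

variable {Δ : ℝ≥0} {n : ℕ}

lemma contOn_Ici_of_forall_Icc {z : ℝ → Vec n}
    (h : ∀ T : ℝ, 0 < T → ContinuousOn z (Icc (-(Δ : ℝ)) T)) :
    ContinuousOn z (Ici (-(Δ : ℝ))) := by
  intro t ht
  have hT : (0:ℝ) < |t| + 1 := by positivity
  have h1 : ContinuousWithinAt z (Icc (-(Δ : ℝ)) (|t| + 1)) t :=
    h _ hT t ⟨ht, by have := le_abs_self t; linarith⟩
  refine h1.mono_of_mem_nhdsWithin ?_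
  have hsub : Ici (-(Δ : ℝ)) ∩ Iic (|t|+1) ⊆ Icc (-(Δ : ℝ)) (|t|+1) :=
    fun s hs => ⟨hs.1, hs.2⟩
  exact mem_of_superset (inter_mem self_mem_nhdsWithin
    (mem_nhdsWithin_of_mem_nhds (Iic_mem_nhds (by have := le_abs_self t; linarith)))) hsub

/-- Pointwise uniform closeness on a window gives segment closeness. -/
lemma seg_dist_le {x y : ℝ → Vec n} {t c : ℝ} (hc : 0 ≤ c) (ht : 0 ≤ t)
    (hx : ContinuousOn x (Ici (-(Δ : ℝ)))) (hy : ContinuousOn y (Ici (-(Δ : ℝ))))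
    (h : ∀ u ∈ Icc (t - (Δ:ℝ)) t, ‖x u - y u‖ ≤ c) :
    ‖seg Δ x t - seg Δ y t‖ ≤ c := by
  refine (ContinuousMap.norm_le _ hc).mpr fun τ => ?_
  have happ : (seg Δ x t - seg Δ y t) τ = x (t + τ.1) - y (t + τ.1) := by
    simp only [ContinuousMap.sub_apply]
    rw [seg_apply (seg_cont_window hx ht), seg_apply (seg_cont_window hy ht)]
  rw [happ]
  refine h _ ⟨?_, ?_⟩
  · have := τ.2.1; linarith
  · have := τ.2.2; linarith

/-- A locally uniform limit of global solutions is a global solution. -/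
lemma limit_solution {f₀ : Hist Δ n → Vec n} (hf : LipOnBounded₀ f₀)
    {φs : ℕ → Hist Δ n} {zs : ℕ → ℝ → Vec n} {ψ : Hist Δ n} {z : ℝ → Vec n}
    (hsol : ∀ j, IsSolution₀ Δ f₀ (φs j) ⊤ (zs j))
    (hconv : ∀ T : ℝ, 0 < T → TendstoUniformlyOn (fun j t => zs j t) z atTop (Icc (-(Δ:ℝ)) T))
    (hψ : Tendsto φs atTop (𝓝 ψ))
    (hbnd : ∀ T : ℝ, 0 < T → ∃ R : ℝ, 0 < R ∧ ∀ j, ∀ t ∈ Icc (0:ℝ) T, ‖seg Δ (zs j) t‖ ≤ R) :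
    IsSolution₀ Δ f₀ ψ ⊤ z := by
  have hΔ : (0:ℝ) ≤ (Δ:ℝ) := Δ.coe_nonneg
  have hzsc : ∀ j, ContinuousOn (zs j) (Ici (-(Δ : ℝ))) := fun j => sol_cont (hsol j)
  have hzc : ContinuousOn z (Ici (-(Δ : ℝ))) := by
    refine contOn_Ici_of_forall_Icc fun T hT => ?_
    refine (hconv T hT).continuousOn ?_
    refine Frequently.of_forall fun j => ?_
    exact (hzsc j).mono (fun s hs => hs.1)
  have hptwise : ∀ t : ℝ, -(Δ:ℝ) ≤ t → Tendsto (fun j => zs j t) atTop (𝓝 (z t)) := by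
    intro t ht
    have hT : (0:ℝ) < |t| + 1 := by positivity
    exact (hconv _ hT).tendsto_at ⟨ht, by have := le_abs_self t; linarith⟩
  constructor
  · exact EReal.zero_lt_top
  · have hset : {u : ℝ | -(Δ : ℝ) ≤ u ∧ (u : EReal) < (⊤ : EReal)} = Ici (-(Δ : ℝ)) := by
      ext u
      simp only [mem_setOf_eq, mem_Ici, EReal.coe_lt_top, and_true]
    rw [hset]; exact hzc
  · intro τ
    have h1 : Tendsto (fun j => zs j τ.1) atTop (𝓝 (z τ.1)) := hptwise τ.1 τ.2.1
    have h2 : Tendsto (fun j => (φs j) τ) atTop (𝓝 (ψ τ)) :=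
      ((continuous_eval_const τ).tendsto ψ).comp hψ
    have heq : (fun j => zs j τ.1) = fun j => (φs j) τ := funext fun j => (hsol j).init τ
    rw [heq] at h1
    exact tendsto_nhds_unique h1 h2
  · intro t ht _
    exact integrand_intervalIntegrable hf hzc ht
  · intro t ht _
    have hT1 : (0:ℝ) < t + 1 := by linarith
    obtain ⟨R, hR, hRseg⟩ := hbnd (t+1) hT1
    have hRz : ∀ u ∈ Icc (0:ℝ) t, ‖seg Δ z u‖ ≤ R + 1 := by
      intro u hu
      obtain ⟨j, hj⟩ := (Metric.tendstoUniformlyOn_iff.mp (hconv (t+1) hT1) 1 one_pos).exists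
      have hd : ‖seg Δ z u - seg Δ (zs j) u‖ ≤ 1 := by
        refine seg_dist_le zero_le_one hu.1 hzc (hzsc j) fun v hv => ?_
        have hvmem : v ∈ Icc (-(Δ:ℝ)) (t+1) := ⟨by linarith [hv.1, hu.1], by linarith [hv.2, hu.2]⟩
        have := hj v hvmem
        rw [dist_eq_norm] at this
        exact this.le
      have h2 := hRseg j u ⟨hu.1, by linarith [hu.2]⟩
      have h3 := norm_sub_norm_le (seg Δ z u) (seg Δ (zs j) u)
      linarith
    obtain ⟨L, hL, hLip⟩ := hf (R + 1) (by positivity)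
    have hint_z : IntervalIntegrable (fun s => f₀ (seg Δ z s)) volume 0 t :=
      integrand_intervalIntegrable hf hzc ht
    have hint_zs : ∀ j, IntervalIntegrable (fun s => f₀ (seg Δ (zs j) s)) volume 0 t :=
      fun j => integrand_intervalIntegrable hf (hzsc j) ht
    have htend : Tendsto (fun j => ∫ s in (0:ℝ)..t, f₀ (seg Δ (zs j) s)) atTop
        (𝓝 (∫ s in (0:ℝ)..t, f₀ (seg Δ z s))) := by
      rw [Metric.tendsto_nhds]
      intro ε hε
      have hε' : (0:ℝ) < ε / ((L+1)*(t+1)) := by positivity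
      filter_upwards [Metric.tendstoUniformlyOn_iff.mp (hconv (t+1) hT1) _ hε'] with j hj
      have hptbnd : ∀ s ∈ Set.uIoc (0:ℝ) t, ‖f₀ (seg Δ (zs j) s) - f₀ (seg Δ z s)‖
          ≤ L * (ε / ((L+1)*(t+1))) := by
        intro s hs
        rw [uIoc_of_le ht] at hs
        have hs' : s ∈ Icc (0:ℝ) t := ⟨hs.1.le, hs.2⟩
        have hsegd : ‖seg Δ (zs j) s - seg Δ z s‖ ≤ ε / ((L+1)*(t+1)) := by
          refine seg_dist_le hε'.le hs'.1 (hzsc j) hzc fun v hv => ?_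
          have hvmem : v ∈ Icc (-(Δ:ℝ)) (t+1) :=
            ⟨by linarith [hv.1, hs'.1], by linarith [hv.2, hs'.2]⟩
          have := hj v hvmem
          rw [dist_comm, dist_eq_norm] at this
          exact this.le
        have hb1 : ‖seg Δ (zs j) s‖ ≤ R + 1 := by
          have := hRseg j s ⟨hs'.1, by linarith [hs'.2]⟩
          linarith
        calc ‖f₀ (seg Δ (zs j) s) - f₀ (seg Δ z s)‖ ≤ L * ‖seg Δ (zs j) s - seg Δ z s‖ :=
              hLip _ _ hb1 (hRz s hs')
          _ ≤ L * (ε / ((L+1)*(t+1))) := mul_le_mul_of_nonneg_left hsegd hL.le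
      have hd : dist (∫ s in (0:ℝ)..t, f₀ (seg Δ (zs j) s)) (∫ s in (0:ℝ)..t, f₀ (seg Δ z s))
          ≤ L * (ε / ((L+1)*(t+1))) * t := by
        rw [dist_eq_norm, ← intervalIntegral.integral_sub (hint_zs j) hint_z]
        have := intervalIntegral.norm_integral_le_of_norm_le_const hptbnd
        rwa [sub_zero, abs_of_nonneg ht] at this
      refine lt_of_le_of_lt hd ?_
      have hlt : L * t < (L+1)*(t+1) := by nlinarith
      calc L * (ε / ((L+1)*(t+1))) * t = (L * t) * (ε / ((L+1)*(t+1))) := by ring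
        _ < ((L+1)*(t+1)) * (ε / ((L+1)*(t+1))) := mul_lt_mul_of_pos_right hlt hε'
        _ = ε := by field_simp
    have h1 : Tendsto (fun j => zs j t) atTop (𝓝 (z t)) := hptwise t (by linarith)
    have h0 : Tendsto (fun j => zs j 0) atTop (𝓝 (z 0)) := hptwise 0 (by linarith)
    have h2 := h0.add htend
    have heq : (fun j => zs j t) =
        fun j => zs j 0 + ∫ s in (0:ℝ)..t, f₀ (seg Δ (zs j) s) := by
      funext j
      exact (hsol j).integral_eq t ht (EReal.coe_lt_top _)
    rw [heq] at h1
    exact tendsto_nhds_unique h1 h2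

end Helpers6

noncomputable section Helpers7

open intervalIntegral

variable {Δ : ℝ≥0} {n : ℕ}

lemma value_diff_le_seg {x y : ℝ → Vec n}
    (hx : ContinuousOn x (Ici (-(Δ : ℝ)))) (hy : ContinuousOn y (Ici (-(Δ : ℝ))))
    {t : ℝ} (ht : -(Δ:ℝ) ≤ t) :
    ‖x t - y t‖ ≤ ‖seg Δ x (max t 0) - seg Δ y (max t 0)‖ := by
  set u := max t 0 with hu
  have hu0 : 0 ≤ u := le_max_right _ _
  have hτmem : t - u ∈ Icc (-(Δ:ℝ)) (0:ℝ) := by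
    constructor
    · rcases le_total t 0 with h | h
      · rw [hu, max_eq_right h]; linarith
      · rw [hu, max_eq_left h]; linarith [Δ.coe_nonneg]
    · linarith [le_max_left t 0]
  have h1 := ContinuousMap.norm_coe_le_norm (seg Δ x u - seg Δ y u) ⟨t - u, hτmem⟩
  have h2 : (seg Δ x u - seg Δ y u) ⟨t - u, hτmem⟩ = x t - y t := by
    simp only [ContinuousMap.sub_apply]
    rw [seg_apply (seg_cont_window hx hu0), seg_apply (seg_cont_window hy hu0)]
    congr 1 <;> · congr 1; ring
  rwa [h2] at h1

/-- Uniform attraction: stability + attractivity + RFC imply uniform convergence times. -/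
lemma uniform_attraction {f₀ : Hist Δ n → Vec n} (hf : LipOnBounded₀ f₀) (hf0 : f₀ 0 = 0)
    (hRFC : RFC₀ Δ f₀)
    (hstab : ∀ ε : ℝ, 0 < ε → ∃ δ : ℝ, 0 < δ ∧
      ∀ (x₀ : Hist Δ n) (tmax : EReal) (x : ℝ → Vec n),
        IsMaxSolution₀ Δ f₀ x₀ tmax x → ‖x₀‖ ≤ δ → ∀ t : ℝ, 0 ≤ t → ‖x t‖ ≤ ε)
    (hattr : ∀ (x₀ : Hist Δ n) (tmax : EReal) (x : ℝ → Vec n),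
        IsMaxSolution₀ Δ f₀ x₀ tmax x → Tendsto x atTop (𝓝 0)) :
    ∀ ε : ℝ, 0 < ε → ∀ r : ℝ, 0 < r → ∃ T : ℝ, 0 ≤ T ∧
      ∀ (x₀ : Hist Δ n) (x : ℝ → Vec n), IsMaxSolution₀ Δ f₀ x₀ ⊤ x → ‖x₀‖ ≤ r →
        ∀ t : ℝ, T ≤ t → ‖x t‖ ≤ ε := by
  intro ε hε r hr
  obtain ⟨δ, hδ, hstabδ⟩ := hstab ε hε
  have hΔ : (0:ℝ) ≤ (Δ:ℝ) := Δ.coe_nonneg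
  set a : ℝ := (Δ:ℝ) + 1 with ha_def
  have ha : 0 < a := by rw [ha_def]; linarith
  -- reduce to the claim that every trajectory's segment enters the δ-ball before a common time
  suffices hclaim : ∃ T : ℝ, 0 ≤ T ∧ ∀ (x₀ : Hist Δ n) (x : ℝ → Vec n),
      IsMaxSolution₀ Δ f₀ x₀ ⊤ x → ‖x₀‖ ≤ r → ∃ s ∈ Icc (0:ℝ) T, ‖seg Δ x s‖ ≤ δ by
    obtain ⟨T, hT0, hT⟩ := hclaim
    refine ⟨T, hT0, fun x₀ x hx hx₀ t htT => ?_⟩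
    obtain ⟨s, hsmem, hseg⟩ := hT x₀ x hx hx₀
    have hrest := restart_max hf hx.1 hsmem.1
    have := hstabδ _ _ _ hrest hseg (t - s) (by linarith [hsmem.2])
    simpa [add_sub_cancel] using this
  by_contra hcon
  push_neg at hcon
  -- a sequence of recalcitrant trajectories
  have hseq : ∀ k : ℕ, ∃ (x₀ : Hist Δ n) (x : ℝ → Vec n),
      IsMaxSolution₀ Δ f₀ x₀ ⊤ x ∧ ‖x₀‖ ≤ r ∧
        ∀ s ∈ Icc (0:ℝ) (a + k), δ < ‖seg Δ x s‖ := by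
    intro k
    obtain ⟨x₀, x, hx, hx₀, hbig⟩ := hcon (a + k) (by positivity)
    exact ⟨x₀, x, hx, hx₀, fun s hs => hbig s hs⟩
  choose x₀s xs hsol hball hbig using hseq
  have hxc : ∀ k, ContinuousOn (xs k) (Ici (-(Δ : ℝ))) := fun k => sol_cont (hsol k).1
  -- a-priori bound and Lipschitz constant on `[0, a]`
  obtain ⟨C₁, hC₁0, hC₁⟩ := rfc_bound hRFC ha hr
  obtain ⟨L₁, hL₁, hLip₁⟩ := hf (C₁ + 1) (by positivity)
  have hfnorm : ∀ φ : Hist Δ n, ‖φ‖ ≤ C₁ → ‖f₀ φ‖ ≤ L₁ * C₁ := by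
    intro φ hφ
    have h1 := hLip₁ φ 0 (by linarith) (by rw [norm_zero]; linarith)
    rw [hf0, sub_zero, sub_zero] at h1
    calc ‖f₀ φ‖ ≤ L₁ * ‖φ‖ := h1
      _ ≤ L₁ * C₁ := mul_le_mul_of_nonneg_left hφ hL₁.le
  set M : ℝ := L₁ * C₁ with hM_def
  have hM0 : 0 ≤ M := mul_nonneg hL₁.le hC₁0
  -- Lipschitz estimate for trajectories on [0, a]
  have hanchor : ∀ k : ℕ, ∀ u v : ℝ, 0 ≤ u → u ≤ v → v ≤ a →
      ‖xs k v - xs k u‖ ≤ M * (v - u) := by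
    intro k u v hu huv hva
    have hv0 : 0 ≤ v := le_trans hu huv
    have h1 := (hsol k).1.integral_eq v hv0 (EReal.coe_lt_top _)
    have h2 := (hsol k).1.integral_eq u hu (EReal.coe_lt_top _)
    have hint : ∀ w : ℝ, 0 ≤ w → IntervalIntegrable (fun s => f₀ (seg Δ (xs k) s)) volume 0 w :=
      fun w hw => integrand_intervalIntegrable hf (hxc k) hw
    have hsub : (∫ s in (0:ℝ)..v, f₀ (seg Δ (xs k) s)) - ∫ s in (0:ℝ)..u, f₀ (seg Δ (xs k) s)
        = ∫ s in u..v, f₀ (seg Δ (xs k) s) :=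
      integral_interval_sub_left (hint v hv0) (hint u hu)
    have hdiff : xs k v - xs k u = ∫ s in u..v, f₀ (seg Δ (xs k) s) := by
      rw [h1, h2]
      rw [← hsub]
      abel
    rw [hdiff]
    have hb : ∀ s ∈ Set.uIoc u v, ‖f₀ (seg Δ (xs k) s)‖ ≤ M := by
      intro s hs
      rw [uIoc_of_le huv] at hs
      exact hfnorm _ (hC₁ _ _ (hsol k) (hball k) s ⟨le_trans hu hs.1.le, le_trans hs.2 hva⟩)
    have := intervalIntegral.norm_integral_le_of_norm_le_const hb
    rwa [abs_of_nonneg (by linarith)] at this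
  -- the segments at the anchor time `a` form a compact family
  set φseq : ℕ → Hist Δ n := fun k => seg Δ (xs k) a with hφseq_def
  have hφC : ∀ k, ‖φseq k‖ ≤ C₁ := fun k =>
    hC₁ _ _ (hsol k) (hball k) a ⟨ha.le, le_refl a⟩
  have hφLip : ∀ k, LipschitzWith M.toNNReal ⇑(φseq k) := by
    intro k
    refine LipschitzWith.of_dist_le_mul fun τ₁ τ₂ => ?_
    have happ : ∀ τ : Icc (-(Δ:ℝ)) (0:ℝ), (φseq k) τ = xs k (a + τ.1) :=
      fun τ => seg_apply (seg_cont_window (hxc k) ha.le) τ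
    rw [happ τ₁, happ τ₂, Subtype.dist_eq, Real.dist_eq, dist_eq_norm]
    rcases le_total τ₁.1 τ₂.1 with h | h
    · rw [← norm_neg, neg_sub]
      have := hanchor k (a + τ₁.1) (a + τ₂.1) (by have := τ₁.2.1; rw [ha_def]; linarith)
        (by linarith) (by have := τ₂.2.2; linarith)
      rw [abs_of_nonpos (by linarith), Real.coe_toNNReal _ hM0]
      calc ‖xs k (a + τ₂.1) - xs k (a + τ₁.1)‖ ≤ M * ((a + τ₂.1) - (a + τ₁.1)) := this
        _ = M * -(τ₁.1 - τ₂.1) := by ring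
    · have := hanchor k (a + τ₂.1) (a + τ₁.1) (by have := τ₂.2.1; rw [ha_def]; linarith)
        (by linarith) (by have := τ₁.2.2; linarith)
      rw [abs_of_nonneg (by linarith), Real.coe_toNNReal _ hM0]
      calc ‖xs k (a + τ₁.1) - xs k (a + τ₂.1)‖ ≤ M * ((a + τ₁.1) - (a + τ₂.1)) := this
        _ = M * (τ₁.1 - τ₂.1) := by ring
  obtain ⟨ψ, _, g, hg, hgtend⟩ := (lipschitz_ball_compact C₁ hC₁0 M.toNNReal).tendsto_subseq
    (x := φseq) (fun k => ⟨hφC k, hφLip k⟩)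
  -- the shifted solutions
  set zs : ℕ → ℝ → Vec n := fun j u => xs (g j) (a + u) with hzs_def
  have hzsol : ∀ j, IsSolution₀ Δ f₀ (φseq (g j)) ⊤ (zs j) := fun j =>
    restart hf (hsol (g j)).1 ha.le
  have hzc : ∀ j, ContinuousOn (zs j) (Ici (-(Δ : ℝ))) := fun j => sol_cont (hzsol j)
  have hsegshift : ∀ j, ∀ u : ℝ, 0 ≤ u → seg Δ (zs j) u = seg Δ (xs (g j)) (a + u) :=
    fun j u hu => seg_shift (hxc (g j)) ha.le hu
  -- uniform segment bounds for the shifted solutions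
  have hCbnd : ∀ T : ℝ, 0 < T → ∃ R : ℝ, 0 < R ∧ ∀ j, ∀ u ∈ Icc (0:ℝ) T,
      ‖seg Δ (zs j) u‖ ≤ R := by
    intro T hT
    obtain ⟨C, hC0, hC⟩ := rfc_bound hRFC (show (0:ℝ) < a + T by linarith) hr
    refine ⟨C + 1, by linarith, fun j u hu => ?_⟩
    rw [hsegshift j u hu.1]
    have := hC _ _ (hsol (g j)) (hball (g j)) (a + u) ⟨by linarith [hu.1], by linarith [hu.2]⟩
    linarith
  -- Grönwall contraction of differences
  have hgrw : ∀ T : ℝ, 0 < T → ∃ K : ℝ, 1 ≤ K ∧ ∀ i j : ℕ, ∀ u ∈ Icc (0:ℝ) T,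
      ‖seg Δ (zs i) u - seg Δ (zs j) u‖ ≤ ‖φseq (g i) - φseq (g j)‖ * K := by
    intro T hT
    obtain ⟨R, hR, hRseg⟩ := hCbnd T hT
    obtain ⟨L, hL, hLip⟩ := hf R hR
    refine ⟨Real.exp (L * T), Real.one_le_exp (by positivity), fun i j u hu => ?_⟩
    have := gronwall_dep hf (hzsol i) (hzsol j) hT.le hR hL hLip
      (fun w hw => hRseg i w hw) (fun w hw => hRseg j w hw) u hu
    refine le_trans this ?_
    refine mul_le_mul_of_nonneg_left ?_ (norm_nonneg _)
    exact Real.exp_le_exp.mpr (mul_le_mul_of_nonneg_left hu.2 hL.le)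
  have hφg_cauchy : CauchySeq (fun j => φseq (g j)) := hgtend.cauchySeq
  -- pointwise limits (with clamping below `-Δ`)
  have hzex : ∀ t : ℝ, ∃ v : Vec n,
      Tendsto (fun j => zs j (max t (-(Δ:ℝ)))) atTop (𝓝 v) := by
    intro t
    set t' : ℝ := max t (-(Δ:ℝ)) with ht'_def
    have ht' : -(Δ:ℝ) ≤ t' := le_max_right _ _
    refine cauchySeq_tendsto_of_complete ?_
    rw [Metric.cauchySeq_iff]
    intro ε' hε'
    set T : ℝ := max t' 0 + 1 with hT_def
    have hT : 0 < T := by positivity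
    obtain ⟨K, hK, hKe⟩ := hgrw T hT
    obtain ⟨N, hN⟩ := Metric.cauchySeq_iff.mp hφg_cauchy (ε' / K) (by positivity)
    refine ⟨N, fun i hi j hj => ?_⟩
    have h1 : ‖zs i t' - zs j t'‖ ≤
        ‖seg Δ (zs i) (max t' 0) - seg Δ (zs j) (max t' 0)‖ :=
      value_diff_le_seg (hzc i) (hzc j) ht'
    have h2 := hKe i j (max t' 0) ⟨le_max_right _ _, by rw [hT_def]; linarith⟩
    have h3 := hN i hi j hj
    rw [dist_eq_norm] at h3 ⊢
    have h4 : ‖φseq (g i) - φseq (g j)‖ * K < (ε' / K) * K :=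
      mul_lt_mul_of_pos_right h3 (by positivity)
    have h5 : (ε' / K) * K = ε' := by field_simp
    calc ‖zs i t' - zs j t'‖ ≤ ‖φseq (g i) - φseq (g j)‖ * K := le_trans h1 h2
      _ < ε' := by rw [← h5]; exact h4
  choose z hz using hzex
  have hzpt : ∀ t : ℝ, -(Δ:ℝ) ≤ t → Tendsto (fun j => zs j t) atTop (𝓝 (z t)) := by
    intro t ht
    have := hz t
    rwa [max_eq_left ht] at this
  -- uniform convergence on compact windows
  have hconv : ∀ T : ℝ, 0 < T →
      TendstoUniformlyOn (fun j t => zs j t) z atTop (Icc (-(Δ:ℝ)) T) := by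
    intro T hT
    rw [Metric.tendstoUniformlyOn_iff]
    intro ε' hε'
    obtain ⟨K, hK, hKe⟩ := hgrw T hT
    obtain ⟨N, hN⟩ := Metric.cauchySeq_iff.mp hφg_cauchy (ε' / 2 / K) (by positivity)
    rw [eventually_atTop]
    refine ⟨N, fun j hj t htmem => ?_⟩
    have hdistle : ∀ i, N ≤ i → dist (zs i t) (zs j t) ≤ ε' / 2 := by
      intro i hi
      have h1 : ‖zs i t - zs j t‖ ≤
          ‖seg Δ (zs i) (max t 0) - seg Δ (zs j) (max t 0)‖ :=
        value_diff_le_seg (hzc i) (hzc j) htmem.1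
      have h2 := hKe i j (max t 0) ⟨le_max_right _ _, max_le htmem.2 hT.le⟩
      have h3 := hN i hi j hj
      rw [dist_eq_norm] at h3
      have h4 : ‖φseq (g i) - φseq (g j)‖ * K ≤ (ε' / 2 / K) * K :=
        mul_le_mul_of_nonneg_right h3.le (by positivity)
      have h5 : (ε' / 2 / K) * K = ε' / 2 := by field_simp
      rw [dist_eq_norm]
      calc ‖zs i t - zs j t‖ ≤ ‖φseq (g i) - φseq (g j)‖ * K := le_trans h1 h2
        _ ≤ ε' / 2 := by rw [← h5]; exact h4
    have hlim : Tendsto (fun i => dist (zs i t) (zs j t)) atTop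
        (𝓝 (dist (z t) (zs j t))) :=
      (hzpt t htmem.1).dist tendsto_const_nhds
    have : dist (z t) (zs j t) ≤ ε' / 2 := by
      refine le_of_tendsto hlim ?_
      filter_upwards [eventually_ge_atTop N] with i hi
      exact hdistle i hi
    linarith
  -- the limit is a global solution through ψ
  have hzsol_lim : IsSolution₀ Δ f₀ ψ ⊤ z :=
    limit_solution hf hzsol hconv hgtend hCbnd
  have hzmax := maxsol_of_top hzsol_lim
  have hzlimc : ContinuousOn z (Ici (-(Δ : ℝ))) := sol_cont hzsol_lim
  -- attractivity of the limit trajectory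
  have htz := hattr ψ ⊤ z hzmax
  have hev : ∀ᶠ u in atTop, ‖z u‖ ≤ δ / 4 := by
    have := htz.eventually (Metric.ball_mem_nhds (0 : Vec n) (show (0:ℝ) < δ/4 by linarith))
    filter_upwards [this] with u hu
    rw [dist_zero_right] at hu
    exact hu.le
  obtain ⟨t₀, ht₀⟩ := eventually_atTop.mp hev
  set tstar : ℝ := max t₀ 0 + (Δ:ℝ) with htstar_def
  have htstar0 : 0 ≤ tstar := by positivity
  have hsegz : ‖seg Δ z tstar‖ ≤ δ / 4 := by
    rw [norm_seg_le_iff (by linarith) (seg_cont_window hzlimc htstar0)]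
    intro τ
    refine ht₀ _ ?_
    have := τ.2.1
    rw [htstar_def]
    have := le_max_left t₀ 0
    linarith [τ.2.1, le_max_left t₀ 0]
  -- Grönwall comparison between the limit and the shifted solutions up to time tstar
  obtain ⟨R, hR, hRseg⟩ := hCbnd (tstar + 1) (by linarith)
  have hRz : ∀ u ∈ Icc (0:ℝ) tstar, ‖seg Δ z u‖ ≤ R + 1 := by
    intro u hu
    obtain ⟨j, hj⟩ := (Metric.tendstoUniformlyOn_iff.mp (hconv (tstar+1) (by linarith))
      1 one_pos).exists
    have hd : ‖seg Δ z u - seg Δ (zs j) u‖ ≤ 1 := by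
      refine seg_dist_le zero_le_one hu.1 hzlimc (hzc j) fun v hv => ?_
      have hvmem : v ∈ Icc (-(Δ:ℝ)) (tstar+1) :=
        ⟨by linarith [hv.1, hu.1], by linarith [hv.2, hu.2]⟩
      have := hj v hvmem
      rw [dist_eq_norm] at this
      exact this.le
    have h2 := hRseg j u ⟨hu.1, by linarith [hu.2]⟩
    have h3 := norm_sub_norm_le (seg Δ z u) (seg Δ (zs j) u)
    linarith
  obtain ⟨L, hL, hLip⟩ := hf (R + 1) (by positivity)
  -- choose a late enough index
  have hevj : ∀ᶠ j : ℕ in atTop, ‖φseq (g j) - ψ‖ < (δ/2) / Real.exp (L * tstar) ∧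
      tstar ≤ (g j : ℝ) := by
    have h1 : ∀ᶠ j : ℕ in atTop, ‖φseq (g j) - ψ‖ < (δ/2) / Real.exp (L * tstar) := by
      have := hgtend.eventually (Metric.ball_mem_nhds ψ
        (show (0:ℝ) < (δ/2) / Real.exp (L * tstar) by positivity))
      filter_upwards [this] with j hj
      simpa [dist_eq_norm] using hj
    have h2 : ∀ᶠ j : ℕ in atTop, tstar ≤ (g j : ℝ) := by
      filter_upwards [eventually_ge_atTop (Nat.ceil tstar)] with j hj
      calc tstar ≤ (Nat.ceil tstar : ℝ) := Nat.le_ceil _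
        _ ≤ (j : ℝ) := by exact_mod_cast hj
        _ ≤ (g j : ℝ) := by exact_mod_cast hg.le_apply
    exact h1.and h2
  obtain ⟨j, hjclose, hjlate⟩ := hevj.exists
  have hgr := gronwall_dep hf (hzsol j) hzsol_lim htstar0 (by positivity : (0:ℝ) < R + 1) hL hLip
    (fun w hw => le_trans (hRseg j w ⟨hw.1, by linarith [hw.2]⟩) (by linarith))
    hRz tstar ⟨htstar0, le_refl _⟩
  have hsmall : ‖seg Δ (zs j) tstar‖ ≤ 3 * δ / 4 := by
    have h1 : ‖φseq (g j) - ψ‖ * Real.exp (L * tstar) ≤ δ / 2 := by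
      have hexp : (0:ℝ) < Real.exp (L * tstar) := Real.exp_pos _
      calc ‖φseq (g j) - ψ‖ * Real.exp (L * tstar)
          ≤ ((δ/2) / Real.exp (L * tstar)) * Real.exp (L * tstar) :=
            mul_le_mul_of_nonneg_right hjclose.le hexp.le
        _ = δ / 2 := by field_simp
    have h2 := norm_sub_norm_le (seg Δ (zs j) tstar) (seg Δ z tstar)
    have h3 := le_trans hgr h1
    linarith
  -- contradiction with the recalcitrance of trajectory `g j`
  have hbigj := hbig (g j) (a + tstar) ⟨by linarith, by linarith⟩
  rw [← hsegshift j tstar htstar0] at hbigj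
  linarith
end Helpers7

noncomputable section Helpers8

open intervalIntegral

/-- The primitive of a monotone function is continuous. -/
lemma continuous_primitive_of_monotone {g : ℝ → ℝ} (hg : Monotone g) :
    Continuous fun w => ∫ x in (0:ℝ)..w, g x := by
  rw [continuous_iff_continuousAt]
  intro w₀
  have hint : ∀ u v : ℝ, IntervalIntegrable g volume u v :=
    fun u v => (hg.monotoneOn _).intervalIntegrable
  rw [Metric.continuousAt_iff]
  intro ε hε
  set B : ℝ := max |g (w₀ + 1)| |g (w₀ - 1)| + 1 with hB_def
  have hB1 : 1 ≤ B := by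
    have := le_max_left |g (w₀ + 1)| |g (w₀ - 1)|
    have := abs_nonneg (g (w₀ + 1))
    rw [hB_def]
    have := le_max_left |g (w₀+1)| |g (w₀-1)|
    nlinarith [abs_nonneg (g (w₀+1)), le_max_left |g (w₀+1)| |g (w₀-1)|]
  have hB0 : 0 < B := by linarith
  refine ⟨min 1 (ε / B), by positivity, fun {w} hw => ?_⟩
  have hw1 : |w - w₀| < 1 := by
    rw [Real.dist_eq] at hw
    exact lt_of_lt_of_le hw (min_le_left _ _)
  have hwε : |w - w₀| < ε / B := by
    rw [Real.dist_eq] at hw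
    exact lt_of_lt_of_le hw (min_le_right _ _)
  have hsub : (∫ x in (0:ℝ)..w, g x) - ∫ x in (0:ℝ)..w₀, g x = ∫ x in w₀..w, g x :=
    integral_interval_sub_left (hint 0 w) (hint 0 w₀)
  rw [Real.dist_eq, hsub]
  have hbnd : ∀ x ∈ Set.uIoc w₀ w, ‖g x‖ ≤ B := by
    intro x hx
    have hxlo : w₀ - 1 ≤ x := by
      rcases le_total w₀ w with h | h
      · rw [uIoc_of_le h] at hx; linarith [hx.1]
      · rw [uIoc_of_ge h] at hx
        have : w₀ - 1 < w := by
          have := abs_lt.mp hw1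
          linarith [this.2]
        linarith [hx.1, abs_lt.mp hw1]
    have hxhi : x ≤ w₀ + 1 := by
      rcases le_total w₀ w with h | h
      · rw [uIoc_of_le h] at hx
        have := abs_lt.mp hw1
        linarith [hx.2, this.1]
      · rw [uIoc_of_ge h] at hx; linarith [hx.2]
    rw [Real.norm_eq_abs, abs_le]
    constructor
    · have h1 : g (w₀ - 1) ≤ g x := hg hxlo
      have h2 : -|g (w₀ - 1)| ≤ g (w₀ - 1) := neg_abs_le _
      have h3 : |g (w₀-1)| ≤ B - 1 := by rw [hB_def]; simp [le_max_right]
      linarith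
    · have h1 : g x ≤ g (w₀ + 1) := hg hxhi
      have h2 : g (w₀ + 1) ≤ |g (w₀ + 1)| := le_abs_self _
      have h3 : |g (w₀+1)| ≤ B - 1 := by rw [hB_def]; simp [le_max_left]
      linarith
  have := intervalIntegral.norm_integral_le_of_norm_le_const hbnd
  rw [Real.norm_eq_abs] at this
  calc |∫ x in w₀..w, g x| ≤ B * |w - w₀| := this
    _ < B * (ε / B) := by
        refine mul_lt_mul_of_pos_left hwε hB0
    _ = ε := by field_simp

/-- Abstract construction of a `𝒦ℒ` majorant. -/
lemma kl_construction {σ : ℝ → ℝ → ℝ}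
    (hnn : ∀ a t, 0 ≤ σ a t)
    (hmono : ∀ t, Monotone fun a => σ a t)
    (hanti : ∀ a, Antitone (σ a))
    (hbd : ∀ a t, σ a t ≤ σ a 0)
    (hstab0 : ∀ ε : ℝ, 0 < ε → ∃ δ : ℝ, 0 < δ ∧ ∀ a : ℝ, a ≤ δ → σ a 0 ≤ ε)
    (htend : ∀ a, Tendsto (σ a) atTop (𝓝 0)) :
    ∃ β : ℝ → ℝ → ℝ, ClassKL β ∧ ∀ a t, 0 ≤ a → 0 ≤ t → σ a t ≤ β a t := by
  -- integrability of σ in the second variable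
  have hint : ∀ a : ℝ, ∀ u v : ℝ, IntervalIntegrable (σ a) volume u v :=
    fun a u v => ((hanti a).antitoneOn _).intervalIntegrable
  -- σ 0 vanishes identically
  have hσ0 : ∀ t, σ 0 t = 0 := by
    intro t
    have h1 : σ 0 0 ≤ 0 := by
      by_contra hpos
      push_neg at hpos
      obtain ⟨δ, hδ, hδle⟩ := hstab0 (σ 0 0 / 2) (by linarith)
      have h2 := hδle 0 hδ.le
      linarith
    have h2 := hbd 0 t
    have h3 := hnn 0 t
    linarith
  -- the sliding-window average H
  set H : ℝ → ℝ → ℝ := fun a t => ∫ s in (t-1)..t, σ a s with hH_def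
  have hH_nonneg : ∀ a t, 0 ≤ H a t :=
    fun a t => intervalIntegral.integral_nonneg (by linarith) (fun s _ => hnn a s)
  have hH_ge : ∀ a t, σ a t ≤ H a t := by
    intro a t
    have h1 : (∫ _ in (t-1)..t, σ a t) ≤ ∫ s in (t-1)..t, σ a s := by
      refine intervalIntegral.integral_mono_on (by linarith) intervalIntegrable_const
        (hint a _ _) (fun s hs => hanti a hs.2)
    rwa [intervalIntegral.integral_const, show t - (t-1) = 1 by ring, one_smul] at h1
  have hH_le : ∀ a t, H a t ≤ σ a (t-1) := by
    intro a t
    have h1 : (∫ s in (t-1)..t, σ a s) ≤ ∫ _ in (t-1)..t, σ a (t-1) := by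
      refine intervalIntegral.integral_mono_on (by linarith) (hint a _ _)
        intervalIntegrable_const (fun s hs => hanti a hs.1)
    rwa [intervalIntegral.integral_const, show t - (t-1) = 1 by ring, one_smul] at h1
  have hH_le_sup : ∀ a t, H a t ≤ σ a 0 := by
    intro a t
    have h1 : (∫ s in (t-1)..t, σ a s) ≤ ∫ _ in (t-1)..t, σ a 0 := by
      refine intervalIntegral.integral_mono_on (by linarith) (hint a _ _)
        intervalIntegrable_const (fun s _ => hbd a s)
    rwa [intervalIntegral.integral_const, show t - (t-1) = 1 by ring, one_smul] at h1
  have hH_mono : ∀ t, Monotone fun a => H a t := by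
    intro t a₁ a₂ ha
    exact intervalIntegral.integral_mono_on (by linarith) (hint a₁ _ _) (hint a₂ _ _)
      (fun s _ => hmono s ha)
  have hH_anti : ∀ a, Antitone fun t => H a t := by
    intro a t₁ t₂ ht
    have hrep : ∀ t : ℝ, H a t = ∫ v in (0:ℝ)..1, σ a ((t-1) + v) := by
      intro t
      rw [hH_def]
      simp only
      rw [intervalIntegral.integral_comp_add_left (σ a) (t-1)]
      norm_num
    simp only
    rw [hrep t₁, hrep t₂]
    refine intervalIntegral.integral_mono_on zero_le_one
      (((hanti a).comp_monotone (by intro u v huv; simpa using huv : Monotone fun v => (t₂ - 1) + v)).antitoneOn _).intervalIntegrable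
      (((hanti a).comp_monotone (by intro u v huv; simpa using huv : Monotone fun v => (t₁ - 1) + v)).antitoneOn _).intervalIntegrable
      (fun v _ => hanti a (by linarith))
  have hH_lip : ∀ a t t', |H a t - H a t'| ≤ 2 * σ a 0 * |t - t'| := by
    intro a t t'
    set P : ℝ → ℝ := fun w => ∫ s in (0:ℝ)..w, σ a s with hP_def
    have hPdiff : ∀ u v : ℝ, |P v - P u| ≤ σ a 0 * |v - u| := by
      intro u v
      have hsub : P v - P u = ∫ s in u..v, σ a s :=
        integral_interval_sub_left (hint a 0 v) (hint a 0 u)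
      rw [hsub]
      have := intervalIntegral.norm_integral_le_of_norm_le_const
        (C := σ a 0) (f := σ a) (a := u) (b := v) ?_
      · rwa [Real.norm_eq_abs] at this
      · intro s _
        rw [Real.norm_eq_abs, abs_of_nonneg (hnn a s)]
        exact hbd a s
    have hHP : ∀ w : ℝ, H a w = P w - P (w-1) := by
      intro w
      rw [hH_def, hP_def]
      simp only
      rw [eq_comm]
      exact integral_interval_sub_left (hint a 0 w) (hint a 0 (w-1))
    rw [hHP t, hHP t']
    have h1 := hPdiff t' t
    have h2 := hPdiff (t'-1) (t-1)
    have h3 : |t - 1 - (t' - 1)| = |t - t'| := by ring_nf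
    rw [h3] at h2
    calc |P t - P (t-1) - (P t' - P (t'-1))| ≤ |P t - P t'| + |P (t-1) - P (t'-1)| := by
          have := abs_sub (P t - P t') (P (t-1) - P (t'-1))
          have heq : P t - P (t-1) - (P t' - P (t'-1)) = (P t - P t') - (P (t-1) - P (t'-1)) := by
            ring
          rw [heq]
          exact abs_sub _ _
      _ ≤ σ a 0 * |t - t'| + σ a 0 * |t - t'| := add_le_add h1 h2
      _ = 2 * σ a 0 * |t - t'| := by ring
  -- the doubly-averaged majorant G
  set G : ℝ → ℝ → ℝ := fun r t => ∫ u in (1:ℝ)..2, H (r*u) t with hG_def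
  have hGint : ∀ r t : ℝ, 0 ≤ r → IntervalIntegrable (fun u => H (r*u) t) volume 1 2 := by
    intro r t hr
    have hm : Monotone fun u => H (r*u) t :=
      fun u v huv => hH_mono t (mul_le_mul_of_nonneg_left huv hr)
    exact (hm.monotoneOn _).intervalIntegrable
  have hG_nonneg : ∀ r t : ℝ, 0 ≤ r → 0 ≤ G r t := fun r t hr =>
    intervalIntegral.integral_nonneg one_le_two (fun u _ => hH_nonneg _ _)
  have hG_ge : ∀ r t : ℝ, 0 ≤ r → σ r t ≤ G r t := by
    intro r t hr
    have h1 : (∫ _ in (1:ℝ)..2, H r t) ≤ G r t := by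
      refine intervalIntegral.integral_mono_on one_le_two intervalIntegrable_const
        (hGint r t hr) (fun u hu => hH_mono t ?_)
      nlinarith [hu.1]
    rw [intervalIntegral.integral_const, show (2:ℝ) - 1 = 1 by ring, one_smul] at h1
    exact le_trans (hH_ge r t) h1
  have hG_le : ∀ r t : ℝ, 0 ≤ r → G r t ≤ H (2*r) t := by
    intro r t hr
    have h1 : G r t ≤ ∫ _ in (1:ℝ)..2, H (2*r) t := by
      refine intervalIntegral.integral_mono_on one_le_two (hGint r t hr)
        intervalIntegrable_const (fun u hu => hH_mono t ?_)
      nlinarith [hu.2]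
    rwa [intervalIntegral.integral_const, show (2:ℝ) - 1 = 1 by ring, one_smul] at h1
  have hG_mono : ∀ t : ℝ, ∀ r₁ r₂ : ℝ, 0 ≤ r₁ → r₁ ≤ r₂ → G r₁ t ≤ G r₂ t := by
    intro t r₁ r₂ h1 h12
    refine intervalIntegral.integral_mono_on one_le_two (hGint r₁ t h1)
      (hGint r₂ t (by linarith)) (fun u hu => hH_mono t ?_)
    have : (0:ℝ) ≤ u := by linarith [hu.1]
    exact mul_le_mul_of_nonneg_right h12 this
  have hG_anti : ∀ r : ℝ, 0 ≤ r → ∀ t₁ t₂ : ℝ, t₁ ≤ t₂ → G r t₂ ≤ G r t₁ := by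
    intro r hr t₁ t₂ ht
    exact intervalIntegral.integral_mono_on one_le_two (hGint r t₂ hr) (hGint r t₁ hr)
      (fun u _ => hH_anti (r*u) ht)
  have hG_lipt : ∀ r : ℝ, 0 ≤ r → ∀ t t' : ℝ,
      |G r t - G r t'| ≤ 2 * σ (2*r) 0 * |t - t'| := by
    intro r hr t t'
    have hsub : G r t - G r t' = ∫ u in (1:ℝ)..2, (H (r*u) t - H (r*u) t') := by
      rw [hG_def]
      simp only
      rw [intervalIntegral.integral_sub (hGint r t hr) (hGint r t' hr)]
    rw [hsub]
    have hb : ∀ u ∈ Set.uIoc (1:ℝ) 2, ‖H (r*u) t - H (r*u) t'‖ ≤ 2 * σ (2*r) 0 * |t - t'| := by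
      intro u hu
      rw [uIoc_of_le one_le_two] at hu
      rw [Real.norm_eq_abs]
      refine le_trans (hH_lip (r*u) t t') ?_
      have h1 : σ (r*u) 0 ≤ σ (2*r) 0 := hmono 0 (by nlinarith [hu.2])
      have h2 : (0:ℝ) ≤ |t - t'| := abs_nonneg _
      nlinarith [hnn (r*u) 0]
    have := intervalIntegral.norm_integral_le_of_norm_le_const hb
    rw [Real.norm_eq_abs, show |(2:ℝ) - 1| = 1 by norm_num, mul_one] at this
    exact this
  have hH0 : ∀ t : ℝ, H 0 t = 0 := by
    intro t
    rw [hH_def]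
    simp only
    rw [intervalIntegral.integral_congr (g := fun _ => (0:ℝ)) (fun s _ => hσ0 s)]
    simp
  have hG0 : ∀ t : ℝ, G 0 t = 0 := by
    intro t
    rw [hG_def]
    simp only [zero_mul]
    rw [intervalIntegral.integral_congr (g := fun _ => (0:ℝ)) (fun u _ => hH0 t)]
    simp
  -- continuity of G in the first variable, within [0, ∞)
  have hQcont : ∀ t : ℝ, Continuous fun w => ∫ x in (0:ℝ)..w, H x t :=
    fun t => continuous_primitive_of_monotone (hH_mono t)
  have hHint : ∀ t : ℝ, ∀ u v : ℝ, IntervalIntegrable (fun a => H a t) volume u v :=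
    fun t u v => ((hH_mono t).monotoneOn _).intervalIntegrable
  have hcr : ∀ t : ℝ, ∀ r₀ : ℝ, 0 ≤ r₀ → ContinuousWithinAt (fun r => G r t) (Ici 0) r₀ := by
    intro t r₀ hr₀
    rcases eq_or_lt_of_le hr₀ with h0 | hpos
    · -- at zero
      rw [Metric.continuousWithinAt_iff]
      intro ε hε
      obtain ⟨δ, hδ, hδle⟩ := hstab0 (ε/2) (by linarith)
      refine ⟨δ/2, by linarith, fun r hr hdist => ?_⟩
      have hr0 : (0:ℝ) ≤ r := hr
      rw [Real.dist_eq, ← h0, sub_zero, abs_of_nonneg hr0] at hdist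
      have h1 : G r t ≤ σ (2*r) 0 := le_trans (hG_le r t hr0) (hH_le_sup _ _)
      have h2 : σ (2*r) 0 ≤ ε/2 := hδle (2*r) (by linarith)
      rw [Real.dist_eq, ← h0, hG0, sub_zero, abs_of_nonneg (hG_nonneg r t hr0)]
      linarith
    · -- at a positive point
      have hkey : ∀ᶠ r in 𝓝[Ici (0:ℝ)] r₀, G r t =
          r⁻¹ * ((∫ x in (0:ℝ)..(2*r), H x t) - ∫ x in (0:ℝ)..r, H x t) := by
        have hIoi : Ioi (0:ℝ) ∈ 𝓝[Ici (0:ℝ)] r₀ :=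
          mem_nhdsWithin_of_mem_nhds (Ioi_mem_nhds hpos)
        filter_upwards [hIoi] with r hrpos
        have hrne : r ≠ 0 := ne_of_gt hrpos
        have h1 : (∫ u in (1:ℝ)..2, H (r*u) t) =
            r⁻¹ • ∫ x in (r*1)..(r*2), H x t :=
          intervalIntegral.integral_comp_mul_left (fun a => H a t) hrne
        have h2 : (∫ x in (0:ℝ)..(r*2), H x t) - ∫ x in (0:ℝ)..(r*1), H x t
            = ∫ x in (r*1)..(r*2), H x t :=
          integral_interval_sub_left (hHint t 0 (r*2)) (hHint t 0 (r*1))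
        rw [hG_def]
        simp only
        rw [h1, ← h2, smul_eq_mul]
        have : r * 1 = r := by ring
        rw [this, show r * 2 = 2 * r by ring]
      have hc2 : ContinuousWithinAt
          (fun r : ℝ => r⁻¹ * ((∫ x in (0:ℝ)..(2*r), H x t) - ∫ x in (0:ℝ)..r, H x t))
          (Ici 0) r₀ := by
        refine ContinuousAt.continuousWithinAt ?_
        refine ContinuousAt.mul (continuousAt_inv₀ (ne_of_gt hpos)) ?_
        refine ContinuousAt.sub ?_ ?_
        · exact ((hQcont t).comp (continuous_const.mul continuous_id)).continuousAt
        · exact (hQcont t).continuousAt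
      refine hc2.congr_of_eventuallyEq hkey ?_
      have hr₀ne : r₀ ≠ 0 := ne_of_gt hpos
      have h1 : (∫ u in (1:ℝ)..2, H (r₀*u) t) =
          r₀⁻¹ • ∫ x in (r₀*1)..(r₀*2), H x t :=
        intervalIntegral.integral_comp_mul_left (fun a => H a t) hr₀ne
      have h2 : (∫ x in (0:ℝ)..(r₀*2), H x t) - ∫ x in (0:ℝ)..(r₀*1), H x t
          = ∫ x in (r₀*1)..(r₀*2), H x t :=
        integral_interval_sub_left (hHint t 0 (r₀*2)) (hHint t 0 (r₀*1))
      rw [hG_def]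
      simp only
      rw [h1, ← h2, smul_eq_mul]
      have : r₀ * 1 = r₀ := by ring
      rw [this, show r₀ * 2 = 2 * r₀ by ring]
  -- continuity of G in the second variable
  have hct : ∀ r : ℝ, 0 ≤ r → Continuous (fun t => G r t) := by
    intro r hr
    have hlip : LipschitzWith (2 * σ (2*r) 0).toNNReal (fun t => G r t) := by
      refine LipschitzWith.of_dist_le_mul fun t t' => ?_
      rw [Real.dist_eq, Real.dist_eq, Real.coe_toNNReal _ (mul_nonneg (by norm_num) (hnn (2*r) 0))]
      exact hG_lipt r hr t t'
    exact hlip.continuous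
  -- assemble β
  refine ⟨fun r t => G r t + r * Real.exp (-t), ⟨?_, ?_⟩, ?_⟩
  · -- class K in the first argument
    intro t _
    refine ⟨?_, ?_, ?_⟩
    · intro r₀ hr₀
      refine (hcr t r₀ hr₀).add ?_
      exact ((continuous_id.mul continuous_const).continuousWithinAt)
    · intro r₁ h1 r₂ h2 hlt
      show G r₁ t + r₁ * Real.exp (-t) < G r₂ t + r₂ * Real.exp (-t)
      have ha := hG_mono t r₁ r₂ h1 hlt.le
      have hb : r₁ * Real.exp (-t) < r₂ * Real.exp (-t) :=
        mul_lt_mul_of_pos_right hlt (Real.exp_pos _)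
      linarith
    · show G 0 t + 0 * Real.exp (-t) = 0
      rw [hG0]
      ring
  · -- class L in the second argument
    intro s hs
    refine ⟨?_, ?_, ?_⟩
    · exact ((hct s hs).add (continuous_const.mul (Real.continuous_exp.comp
        continuous_neg))).continuousOn
    · intro t₁ _ t₂ _ ht
      show G s t₂ + s * Real.exp (-t₂) ≤ G s t₁ + s * Real.exp (-t₁)
      have ha := hG_anti s hs t₁ t₂ ht
      have hb : s * Real.exp (-t₂) ≤ s * Real.exp (-t₁) :=
        mul_le_mul_of_nonneg_left (Real.exp_le_exp.mpr (by linarith)) hs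
      linarith
    · have h1 : Tendsto (fun t => σ (2*s) (t-1)) atTop (𝓝 0) := by
        refine (htend (2*s)).comp ?_
        exact tendsto_atTop_add_const_right atTop (-1) tendsto_id
      have h2 : Tendsto (fun t => s * Real.exp (-t)) atTop (𝓝 0) := by
        have := Real.tendsto_exp_neg_atTop_nhds_zero
        have h3 := this.const_mul s
        simpa using h3
      have hsum : Tendsto (fun t => σ (2*s) (t-1) + s * Real.exp (-t)) atTop (𝓝 0) := by
        have := h1.add h2
        simpa using this
      refine squeeze_zero (fun t => ?_) (fun t => ?_) hsum
      · show (0:ℝ) ≤ G s t + s * Real.exp (-t)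
        have := hG_nonneg s t hs
        have h4 : (0:ℝ) ≤ s * Real.exp (-t) := by positivity
        linarith
      · show G s t + s * Real.exp (-t) ≤ σ (2*s) (t-1) + s * Real.exp (-t)
        have h5 : G s t ≤ σ (2*s) (t-1) := le_trans (hG_le s t hs) (hH_le _ _)
        linarith
  · intro a t ha _
    show σ a t ≤ G a t + a * Real.exp (-t)
    have h1 := hG_ge a t ha
    have h2 : (0:ℝ) ≤ a * Real.exp (-t) := by positivity
    linarith
end Helpers8

/-- Under robust forward completeness, GAS is equivalent to stability
combined with global attractivity. -/
theorem gas_iff_stability_and_global_attractivity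
    (Δ : ℝ≥0) (n : ℕ) (f₀ : Hist Δ n → Vec n)
    (hf : LipOnBounded₀ f₀) (hf0 : f₀ 0 = 0) (hRFC : RFC₀ Δ f₀) :
    GAS Δ f₀ ↔
      ((∀ ε : ℝ, 0 < ε → ∃ δ : ℝ, 0 < δ ∧
          ∀ (x₀ : Hist Δ n) (tmax : EReal) (x : ℝ → Vec n),
            IsMaxSolution₀ Δ f₀ x₀ tmax x → ‖x₀‖ ≤ δ →
              ∀ t : ℝ, 0 ≤ t → ‖x t‖ ≤ ε) ∧
        (∀ (x₀ : Hist Δ n) (tmax : EReal) (x : ℝ → Vec n),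
            IsMaxSolution₀ Δ f₀ x₀ tmax x → Tendsto x atTop (𝓝 0))) := by
  constructor
  · -- GAS implies stability and attractivity
    rintro ⟨β, hβKL, hβ⟩
    constructor
    · intro ε hε
      obtain ⟨hcont, hsm, hz⟩ := hβKL.1 0 le_rfl
      have hz' : β 0 0 = 0 := hz
      have hcw : ContinuousWithinAt (fun s => β s 0) (Ici 0) 0 := hcont 0 Set.self_mem_Ici
      rw [Metric.continuousWithinAt_iff] at hcw
      obtain ⟨δ', hδ', hδ'p⟩ := hcw ε hε
      refine ⟨δ'/2, by linarith, fun x₀ tmax x hx hx₀ t ht => ?_⟩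
      have hβδ : β (δ'/2) 0 < ε := by
        have h1 := hδ'p (show δ'/2 ∈ Ici (0:ℝ) from mem_Ici.mpr (by linarith))
          (show dist (δ'/2) 0 < δ' by
            rw [Real.dist_eq, sub_zero, abs_of_nonneg (by linarith)]; linarith)
        rw [Real.dist_eq, hz', sub_zero] at h1
        exact lt_of_le_of_lt (le_abs_self _) h1
      obtain ⟨htop, hbound⟩ := hβ x₀ tmax x hx
      calc ‖x t‖ ≤ β ‖x₀‖ t := hbound t ht
        _ ≤ β ‖x₀‖ 0 := (hβKL.2 ‖x₀‖ (norm_nonneg _)).2.1 Set.self_mem_Ici (mem_Ici.mpr ht) ht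
        _ ≤ β (δ'/2) 0 := hsm.monotoneOn (norm_nonneg _)
            (mem_Ici.mpr (by linarith)) hx₀
        _ ≤ ε := hβδ.le
    · intro x₀ tmax x hx
      obtain ⟨htop, hbound⟩ := hβ x₀ tmax x hx
      have htend0 : Tendsto (fun t => β ‖x₀‖ t) atTop (𝓝 0) :=
        (hβKL.2 ‖x₀‖ (norm_nonneg _)).2.2
      refine squeeze_zero_norm' ?_ htend0
      filter_upwards [eventually_ge_atTop (0:ℝ)] with t ht using hbound t ht
  · rintro ⟨hstab, hattr⟩
    have hUA := uniform_attraction hf hf0 hRFC hstab hattr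
    classical
    set Ω : ℝ → ℝ → Set ℝ := fun a t => insert (0:ℝ)
      {v | ∃ (x₀ : Hist Δ n) (x : ℝ → Vec n) (s : ℝ),
        IsMaxSolution₀ Δ f₀ x₀ ⊤ x ∧ ‖x₀‖ ≤ a ∧ 0 ≤ s ∧ t ≤ s ∧ v = ‖x s‖} with hΩ_def
    have hΩne : ∀ a t, (Ω a t).Nonempty := fun a t => ⟨0, mem_insert _ _⟩
    have hΩmono : ∀ a₁ a₂ t₁ t₂ : ℝ, a₁ ≤ a₂ → t₁ ≤ t₂ → Ω a₁ t₂ ⊆ Ω a₂ t₁ := by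
      intro a₁ a₂ t₁ t₂ ha ht v hv
      rcases hv with rfl | ⟨x₀, x, s, h1, h2, h3, h4, rfl⟩
      · exact mem_insert _ _
      · exact Or.inr ⟨x₀, x, s, h1, le_trans h2 ha, h3, le_trans ht h4, rfl⟩
    have hΩ0 : ∀ a t : ℝ, Ω a t ⊆ Ω a 0 := by
      intro a t v hv
      rcases hv with rfl | ⟨x₀, x, s, h1, h2, h3, _, rfl⟩
      · exact mem_insert _ _
      · exact Or.inr ⟨x₀, x, s, h1, h2, h3, h3, rfl⟩
    have hbdd0 : ∀ a : ℝ, BddAbove (Ω a 0) := by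
      intro a
      set r : ℝ := max a 0 + 1 with hr_def
      have hrpos : 0 < r := by positivity
      obtain ⟨T, hT0, hTua⟩ := hUA 1 one_pos r hrpos
      obtain ⟨C, hC0, hC⟩ := rfc_bound hRFC (show (0:ℝ) < T + 1 by linarith) hrpos
      refine ⟨max C 1, fun v hv => ?_⟩
      rcases hv with rfl | ⟨x₀, x, s, hx, hxa, hs0, _, rfl⟩
      · exact le_trans zero_le_one (le_max_right _ _)
      · have hxr : ‖x₀‖ ≤ r := by
          have : a ≤ max a 0 := le_max_left _ _
          rw [hr_def]; linarith
        rcases le_total s (T+1) with hsT | hsT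
        · have h1 := norm_apply_le_norm_seg (seg_cont_window (sol_cont hx.1) hs0)
          have h2 := hC x₀ x hx hxr s ⟨hs0, hsT⟩
          exact le_trans (le_trans h1 h2) (le_max_left _ _)
        · have h1 := hTua x₀ x hx hxr s (by linarith)
          exact le_trans h1 (le_max_right _ _)
    have hbdd : ∀ a t : ℝ, BddAbove (Ω a t) := fun a t =>
      (hbdd0 a).mono (hΩ0 a t)
    set σ : ℝ → ℝ → ℝ := fun a t => sSup (Ω a t) with hσ_def
    have hσnn : ∀ a t, 0 ≤ σ a t := fun a t => le_csSup (hbdd a t) (mem_insert _ _)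
    have hσmono : ∀ t : ℝ, Monotone fun a => σ a t := fun t a₁ a₂ ha =>
      csSup_le_csSup (hbdd a₂ t) (hΩne a₁ t) (hΩmono a₁ a₂ t t ha le_rfl)
    have hσanti : ∀ a : ℝ, Antitone (σ a) := fun a t₁ t₂ ht =>
      csSup_le_csSup (hbdd a t₁) (hΩne a t₂) (hΩmono a a t₁ t₂ le_rfl ht)
    have hσbd : ∀ a t, σ a t ≤ σ a 0 := fun a t =>
      csSup_le_csSup (hbdd0 a) (hΩne a t) (hΩ0 a t)
    have hσstab : ∀ ε : ℝ, 0 < ε → ∃ δ : ℝ, 0 < δ ∧ ∀ a : ℝ, a ≤ δ → σ a 0 ≤ ε := by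
      intro ε hε
      obtain ⟨δ, hδ, hst⟩ := hstab ε hε
      refine ⟨δ, hδ, fun a ha => ?_⟩
      refine csSup_le (hΩne a 0) fun v hv => ?_
      rcases hv with rfl | ⟨x₀, x, s, hx, hxa, hs0, _, rfl⟩
      · exact hε.le
      · exact hst x₀ ⊤ x hx (le_trans hxa ha) s hs0
    have hσtend : ∀ a : ℝ, Tendsto (σ a) atTop (𝓝 0) := by
      intro a
      rw [Metric.tendsto_atTop]
      intro ε hε
      set r : ℝ := max a 0 + 1 with hr_def
      have hrpos : 0 < r := by positivity
      obtain ⟨T, hT0, hTua⟩ := hUA (ε/2) (by linarith) r hrpos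
      refine ⟨T, fun t ht => ?_⟩
      have hσle : σ a t ≤ ε/2 := by
        refine csSup_le (hΩne a t) fun v hv => ?_
        rcases hv with rfl | ⟨x₀, x, s, hx, hxa, hs0, hts, rfl⟩
        · linarith
        · refine hTua x₀ x hx ?_ s (by linarith)
          have : a ≤ max a 0 := le_max_left _ _
          rw [hr_def]; linarith
      rw [Real.dist_eq, sub_zero, abs_of_nonneg (hσnn a t)]
      linarith
    obtain ⟨β, hβKL, hβdom⟩ := kl_construction hσnn hσmono hσanti hσbd hσstab hσtend
    refine ⟨β, hβKL, fun x₀ tmax x hx => ?_⟩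
    have htop := tmax_top hRFC hx
    subst htop
    refine ⟨rfl, fun t ht => ?_⟩
    have hmem : ‖x t‖ ∈ Ω ‖x₀‖ t := Or.inr ⟨x₀, x, t, hx, le_rfl, ht, le_rfl, rfl⟩
    calc ‖x t‖ ≤ σ ‖x₀‖ t := le_csSup (hbdd _ _) hmem
      _ ≤ β ‖x₀‖ t := hβdom _ _ (norm_nonneg _) ht
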